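/- arXiv:math/0407389 — 9 statements merged into one kernel-verified Lean document; each statement's English description precedes it below -/
import Mathlib

section
/- Let V and W be finite-dimensional real inner product spaces, and for each Y in a subspace H of V let B_Y : W → T be a linear map into an inner product space T, depending linearly on Y, such that rank B_Y ≤ 1 for all Y, and such that ⟨B_X e, B_Y V⟩ = ⟨B_X V, B_Y e⟩ for all X, Y ∈ H and e, V ∈ W (symmetry of inner products coming from the Gauss equation). If some B_X has rank exactly 1, then there is a unit vector e ∈ W, unique up to sign, with B_Y V = ⟨V, e⟩ B_Y e for all Y ∈ H and V ∈ W. -/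
open scoped RealInnerProductSpace

/-- If a linear map has rank at most one, any two values are dependent. -/
lemma aux_dep {W T : Type*} [AddCommGroup W] [Module ℝ W]
    [NormedAddCommGroup T] [InnerProductSpace ℝ T] [FiniteDimensional ℝ T]
    (g : W →ₗ[ℝ] T) (h : Module.finrank ℝ (LinearMap.range g) ≤ 1)
    (a b : W) (hb : g b ≠ 0) : ∃ μ : ℝ, g a = μ • g b := by
  have hle : Submodule.span ℝ {g b} ≤ LinearMap.range g := by
    rw [Submodule.span_le, Set.singleton_subset_iff]
    exact ⟨b, rfl⟩
  have hsp : Module.finrank ℝ (Submodule.span ℝ {g b}) = 1 :=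
    finrank_span_singleton hb
  have heq := Submodule.eq_of_le_of_finrank_le hle (by rw [hsp]; exact h)
  have hmem : g a ∈ Submodule.span ℝ {g b} := heq ▸ LinearMap.mem_range_self g a
  obtain ⟨μ, hμ⟩ := Submodule.mem_span_singleton.mp hmem
  exact ⟨μ, hμ.symm⟩

/-- Algebraic core of Lemma 3.1: if all `B_Y` have rank at most one and the
Gauss-type symmetry holds, and some `B_X` has rank one, then there is a unit
vector `e`, unique up to sign, with `B_Y v = ⟨v,e⟩ B_Y e`. -/
theorem stmt_0 {H W T : Type*}
    [NormedAddCommGroup H] [InnerProductSpace ℝ H] [FiniteDimensional ℝ H]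
    [NormedAddCommGroup W] [InnerProductSpace ℝ W] [FiniteDimensional ℝ W]
    [NormedAddCommGroup T] [InnerProductSpace ℝ T] [FiniteDimensional ℝ T]
    (B : H →ₗ[ℝ] W →ₗ[ℝ] T)
    (hrank : ∀ Y : H, Module.finrank ℝ (LinearMap.range (B Y)) ≤ 1)
    (hsym : ∀ (X Y : H) (e v : W), ⟪B X e, B Y v⟫ = ⟪B X v, B Y e⟫)
    (hone : ∃ X : H, Module.finrank ℝ (LinearMap.range (B X)) = 1) :
    ∃ e : W, ‖e‖ = 1 ∧ (∀ (Y : H) (v : W), B Y v = ⟪v, e⟫ • B Y e) ∧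
      ∀ e' : W, ‖e'‖ = 1 →
        (∀ (Y : H) (v : W), B Y v = ⟪v, e'⟫ • B Y e') →
        e' = e ∨ e' = -e := by
  obtain ⟨X, hX⟩ := hone
  set K : Submodule ℝ W := LinearMap.ker (B X) with hK
  -- finrank of the orthogonal complement of the kernel is 1
  have hrn := (B X).finrank_range_add_finrank_ker
  rw [← hK] at hrn
  have horth := Submodule.finrank_add_finrank_orthogonal (K := K)
  have hKorth : Module.finrank ℝ Kᗮ = 1 := by omega
  -- pick a unit vector e in Kᗮ
  have hpos : 0 < Module.finrank ℝ Kᗮ := by omega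
  have : Nontrivial Kᗮ := Module.finrank_pos_iff.mp hpos
  obtain ⟨⟨v₀, hv₀K⟩, hv₀ne⟩ := exists_ne (0 : Kᗮ)
  have hv₀ : v₀ ≠ 0 := by
    intro h; exact hv₀ne (by simp [h])
  set e : W := ‖v₀‖⁻¹ • v₀ with he
  have heK : e ∈ Kᗮ := Kᗮ.smul_mem _ hv₀K
  have hnorm : ‖e‖ = 1 := by
    rw [he, norm_smul, norm_inv, norm_norm, inv_mul_cancel₀ (norm_ne_zero_iff.mpr hv₀)]
  clear_value e
  clear he hv₀ hv₀ne hv₀K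
  -- e is orthogonal to every element of the kernel
  have heKer : ∀ w ∈ K, ⟪w, e⟫ = 0 := fun w hw =>
    Submodule.inner_right_of_mem_orthogonal hw heK
  -- B X e ≠ 0
  have hBXe : B X e ≠ 0 := by
    intro h
    have heKmem : e ∈ K := h
    have : ⟪e, e⟫ = 0 := heKer e heKmem
    rw [real_inner_self_eq_norm_sq, hnorm] at this
    norm_num at this
  -- key claim: for w in the kernel of B X, B Y w = 0 for every Y
  have hker : ∀ Y : H, ∀ w ∈ K, B Y w = 0 := by
    intro Y w hw
    by_contra hne
    obtain ⟨lam, hlam⟩ := aux_dep (B Y) (hrank Y) e w hne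
    obtain ⟨mu, hmu⟩ := aux_dep (B (X + Y)) (hrank (X + Y)) e w (by
      simp only [map_add, LinearMap.add_apply]
      rw [show B X w = 0 from hw, zero_add]
      exact hne)
    have hBXw : B X w = 0 := hw
    have hXe : B X e = (mu - lam) • B Y w := by
      have h1 : B X e + B Y e = mu • (B X w + B Y w) := by
        simpa [map_add, LinearMap.add_apply] using hmu
      rw [hBXw, zero_add] at h1
      rw [sub_smul, ← hlam] at *
      linear_combination (norm := module) h1
    -- orthogonality: ⟪B X e, B Y w⟫ = 0
    have hperp : ⟪B X e, B Y w⟫ = 0 := by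
      rw [hsym X Y e w, hBXw]
      simp
    have : ⟪B X e, B X e⟫ = 0 := by
      nth_rewrite 2 [hXe]
      rw [real_inner_smul_right, hsym X Y e w, hBXw]
      simp
    exact hBXe (inner_self_eq_zero.mp this)
  -- main formula
  have hmain : ∀ (Y : H) (v : W), B Y v = ⟪v, e⟫ • B Y e := by
    intro Y v
    have hdec : v = ⟪v, e⟫ • e + (v - ⟪v, e⟫ • e) := by abel
    have hene : e ≠ 0 := by
      intro h; rw [h, norm_zero] at hnorm; norm_num at hnorm
    have hle : Submodule.span ℝ {e} ≤ Kᗮ := by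
      rw [Submodule.span_le, Set.singleton_subset_iff]; exact heK
    have hspan : Submodule.span ℝ {e} = Kᗮ :=
      Submodule.eq_of_le_of_finrank_le hle
        (by rw [finrank_span_singleton hene]; exact hKorth.le)
    have hmem : v - ⟪v, e⟫ • e ∈ K := by
      rw [← Submodule.orthogonal_orthogonal K, Submodule.mem_orthogonal]
      intro u hu
      rw [← hspan] at hu
      obtain ⟨t, rfl⟩ := Submodule.mem_span_singleton.mp hu
      rw [real_inner_smul_left, inner_sub_right, real_inner_smul_right,
        real_inner_self_eq_norm_sq, hnorm]
      rw [real_inner_comm e v]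
      ring
    calc B Y v = B Y (⟪v, e⟫ • e + (v - ⟪v, e⟫ • e)) := by rw [← hdec]
    _ = ⟪v, e⟫ • B Y e + B Y (v - ⟪v, e⟫ • e) := by simp
    _ = ⟪v, e⟫ • B Y e := by rw [hker Y _ hmem, add_zero]
  refine ⟨e, hnorm, hmain, ?_⟩
  -- uniqueness up to sign
  intro e' hnorm' hmain'
  have hc : ⟪e, e'⟫ ^ 2 = 1 := by
    have hv : B X (e - ⟪e, e'⟫ • e') = 0 := by
      rw [hmain' X (e - ⟪e, e'⟫ • e')]
      have : ⟪e - ⟪e, e'⟫ • e', e'⟫ = 0 := by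
        rw [inner_sub_left, real_inner_smul_left, real_inner_self_eq_norm_sq, hnorm']
        ring
      rw [this, zero_smul]
    have hmemK : e - ⟪e, e'⟫ • e' ∈ K := hv
    have := heKer _ hmemK
    rw [inner_sub_left, real_inner_smul_left] at this
    rw [real_inner_self_eq_norm_sq, hnorm] at this
    have hsymm : ⟪e', e⟫ = ⟪e, e'⟫ := real_inner_comm e e'
    rw [hsymm] at this
    nlinarith [this]
  have hzero : e - ⟪e, e'⟫ • e' = 0 := by
    have : ‖e - ⟪e, e'⟫ • e'‖ ^ 2 = 0 := by
      rw [← real_inner_self_eq_norm_sq]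
      rw [inner_sub_sub_self]
      rw [real_inner_smul_left, real_inner_smul_right, real_inner_smul_left,
        real_inner_smul_right]
      rw [real_inner_self_eq_norm_sq, real_inner_self_eq_norm_sq, hnorm, hnorm']
      have hsymm : ⟪e', e⟫ = ⟪e, e'⟫ := real_inner_comm e e'
      rw [hsymm]
      nlinarith [hc]
    have := pow_eq_zero_iff (n := 2) (by norm_num) |>.mp this
    exact norm_eq_zero.mp this
  have heq : e = ⟪e, e'⟫ • e' := by linear_combination (norm := module) hzero
  have hfac : (⟪e, e'⟫ - 1) * (⟪e, e'⟫ + 1) = 0 := by nlinarith [hc]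
  rcases mul_eq_zero.mp hfac with h | h
  · left
    have h1 : ⟪e, e'⟫ = 1 := by linarith
    rw [h1, one_smul] at heq
    exact heq.symm
  · right
    have h1 : ⟪e, e'⟫ = -1 := by linarith
    rw [h1] at heq
    rw [heq]
    module
end

section
/- Let A : E → E be the symmetric endomorphism of a real inner product space E = H ⊕ V (orthogonal direct sum) given by A(Y + V) = ⟨Y,X₀⟩(βX₀ + λe) + ⟨V,e⟩(λX₀ + γe), where X₀ ∈ H, e ∈ V are unit vectors and β, λ, γ ∈ ℝ satisfy λ ≠ 0 and βγ − λ² = 0. Then, setting E₀ = (βX₀ + λe)/‖βX₀ + λe‖, one has A(w) = (β + γ)⟨w, E₀⟩E₀ for all w ∈ E, and β + γ ≠ 0. -/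
/-!
Since `βγ = λ²`, the vector `λX₀ + γe` equals `(λ/β)(βX₀ + λe)`, so `A` agrees on `H` and on `V`
with the rank-one map `w ↦ β⁻¹ ⟪u, w⟫ u`, where `u = βX₀ + λe`. As `‖u‖² = β² + λ² = β(β + γ)`,
this is `(β + γ)` times the orthogonal projection onto `ℝ ∙ u`.
-/

open scoped RealInnerProductSpace

theorem add_ne_zero_of_mul_eq_sq {β γ l : ℝ} (h : β * γ = l ^ 2) (hl : l ≠ 0) : β + γ ≠ 0 := by
  intro hsum
  have : β * γ = -β ^ 2 := by rw [eq_neg_of_add_eq_zero_right hsum]; ring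
  nlinarith [sq_nonneg β, sq_pos_of_ne_zero hl]

section

variable {E : Type*} [NormedAddCommGroup E] [InnerProductSpace ℝ E]

theorem inner_normalize_smul_normalize (u w : E) :
    ⟪w, ‖u‖⁻¹ • u⟫ • (‖u‖⁻¹ • u) = (‖u‖ ^ 2)⁻¹ • (⟪u, w⟫ • u) := by
  rw [real_inner_smul_right, real_inner_comm, smul_smul, smul_smul]
  congr 1
  ring

theorem norm_smul_add_smul_sq_of_inner_eq_zero {x y : E} (hx : ‖x‖ = 1) (hy : ‖y‖ = 1)
    (hxy : ⟪x, y⟫ = 0) (a b : ℝ) : ‖a • x + b • y‖ ^ 2 = a ^ 2 + b ^ 2 := by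
  have hxy' : ⟪a • x, b • y⟫ = 0 := by
    rw [real_inner_smul_left, real_inner_smul_right, hxy, mul_zero, mul_zero]
  rw [sq, norm_add_sq_eq_norm_sq_add_norm_sq_real hxy', norm_smul, norm_smul, hx, hy, mul_one,
    mul_one, Real.norm_eq_abs, Real.norm_eq_abs, abs_mul_abs_self, abs_mul_abs_self, sq, sq]

theorem eq_inv_smul_rankOne_of_mul_eq_sq {H V : Submodule ℝ E}
    (horth : ∀ x ∈ H, ∀ v ∈ V, ⟪x, v⟫ = 0) (hsup : H ⊔ V = ⊤)
    {X₀ e : E} (hX₀ : X₀ ∈ H) (he : e ∈ V) {β l γ : ℝ} (hβ : β ≠ 0) (h : β * γ = l ^ 2)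
    {A : E →ₗ[ℝ] E}
    (hAH : ∀ Y ∈ H, A Y = ⟪Y, X₀⟫ • (β • X₀ + l • e))
    (hAV : ∀ v ∈ V, A v = ⟪v, e⟫ • (l • X₀ + γ • e)) :
    A = β⁻¹ • (InnerProductSpace.rankOne ℝ (β • X₀ + l • e) (β • X₀ + l • e)).toLinearMap := by
  refine LinearMap.ext_on_codisjoint (codisjoint_iff.mpr hsup) (fun Y hY => ?_) fun v hv => ?_
  · have hYe : ⟪e, Y⟫ = 0 := by rw [real_inner_comm]; exact horth Y hY e he
    simp only [LinearMap.smul_apply, ContinuousLinearMap.coe_coe,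
      InnerProductSpace.rankOne_apply, inner_add_left, real_inner_smul_left, hYe, hAH Y hY,
      smul_smul, real_inner_comm X₀ Y, mul_zero, add_zero]
    congr 1
    field_simp
  · have hXv : ⟪X₀, v⟫ = 0 := horth X₀ hX₀ v hv
    have hγ : γ = l ^ 2 / β := by field_simp; linarith
    simp only [LinearMap.smul_apply, ContinuousLinearMap.coe_coe,
      InnerProductSpace.rankOne_apply, inner_add_left, real_inner_smul_left, hXv, hAV v hv,
      smul_smul, real_inner_comm e v, smul_add, hγ, mul_zero, zero_add]
    congr 2 <;> field_simp

end

/-- Formula (3.21): for type B₁ (`βγ − λ² = 0`, `λ ≠ 0`) the shape operator is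
`(β+γ)` times the orthogonal projection onto the line spanned by
`E₀ = (βX₀ + λe)/‖βX₀ + λe‖`, and `β + γ ≠ 0`. -/
theorem stmt_3 {E : Type*} [NormedAddCommGroup E] [InnerProductSpace ℝ E]
    (H V : Submodule ℝ E)
    (horth : ∀ x ∈ H, ∀ v ∈ V, ⟪x, v⟫ = 0)
    (hsup : H ⊔ V = ⊤)
    (X₀ : E) (hX₀ : X₀ ∈ H) (hX₀n : ‖X₀‖ = 1)
    (e : E) (he : e ∈ V) (hen : ‖e‖ = 1)
    (β lam γ : ℝ) (hlam : lam ≠ 0) (hB1 : β * γ - lam ^ 2 = 0)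
    (A : E →ₗ[ℝ] E)
    (hAH : ∀ Y ∈ H, A Y = ⟪Y, X₀⟫ • (β • X₀ + lam • e))
    (hAV : ∀ v ∈ V, A v = ⟪v, e⟫ • (lam • X₀ + γ • e)) :
    β + γ ≠ 0 ∧ ∀ w : E,
      A w = ((β + γ) *
          ⟪w, ‖β • X₀ + lam • e‖⁻¹ • (β • X₀ + lam • e)⟫) •
        (‖β • X₀ + lam • e‖⁻¹ • (β • X₀ + lam • e)) := by
  have h : β * γ = lam ^ 2 := sub_eq_zero.mp hB1
  have hβγ : β + γ ≠ 0 := add_ne_zero_of_mul_eq_sq h hlam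
  have hβ : β ≠ 0 := left_ne_zero_of_mul (h ▸ pow_ne_zero 2 hlam)
  have hA := eq_inv_smul_rankOne_of_mul_eq_sq horth hsup hX₀ he hβ h hAH hAV
  have hu : ‖β • X₀ + lam • e‖ ^ 2 = β * (β + γ) := by
    rw [norm_smul_add_smul_sq_of_inner_eq_zero hX₀n hen (horth X₀ hX₀ e he), ← h]
    ring
  refine ⟨hβγ, fun w => ?_⟩
  rw [hA, mul_smul, inner_normalize_smul_normalize, hu, smul_smul]
  simp only [LinearMap.smul_apply, ContinuousLinearMap.coe_coe, InnerProductSpace.rankOne_apply]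
  congr 1
  field_simp
end

section
/- Let H, V be subspaces of a real inner product space with dim V ≥ 2, let X₀ ∈ H and e ∈ V be unit vectors, and let β̃ : H × H → ℝ, γ̃ : V × V → ℝ be symmetric bilinear forms with β̃₀ = β̃(X₀,X₀), γ̃₀ = γ̃(e,e). Suppose that for some δ ∈ ℝ with δ ≠ 0 (playing the role of βγ − λ²) one has β̃(Y,Z)(γ̃(V,W) − ⟨V,W⟩γ̃₀) = δ⟨Y,X₀⟩⟨Z,X₀⟩⟨PV,PW⟩ for all Y,Z ∈ H and V,W ∈ V, where P is the orthogonal projection of V onto {e}^⊥. Then β̃₀ ≠ 0, β̃(Y,Z) = ⟨Y,X₀⟩⟨Z,X₀⟩β̃₀ for all Y,Z ∈ H, and β̃₀·γ̃(V,W) = ⟨V,W⟩(β̃₀γ̃₀ + δ) − δ⟨V,e⟩⟨W,e⟩ for all V,W ∈ V. -/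
open scoped RealInnerProductSpace

/-!
Pick `u ∈ V` nonzero and orthogonal to `e` (possible since `dim V ≥ 2`). Taking `v = w = u`
in the hypothesis gives `β̃(Y,Z) c = δ ⟨Y,X₀⟩⟨Z,X₀⟩ ‖u‖²` with `c = γ̃(u,u) − ‖u‖² γ̃₀`
independent of `Y, Z`. At `Y = Z = X₀` the right-hand side `δ ‖u‖²` is nonzero, so both
`β̃₀` and `c` are nonzero, and dividing by `c` yields the rank-one form of `β̃`. The formula
for `γ̃` is the hypothesis at `Y = Z = X₀`, once `⟨PV,PW⟩ = ⟨V,W⟩ − ⟨V,e⟩⟨W,e⟩` is expanded.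
-/

theorem Submodule.exists_mem_ne_zero_inner_eq_zero {𝕜 E : Type*} [RCLike 𝕜]
    [NormedAddCommGroup E] [InnerProductSpace 𝕜 E] (V : Submodule 𝕜 E)
    (hV : 2 ≤ Module.finrank 𝕜 V) (e : E) :
    ∃ u ∈ V, u ≠ 0 ∧ inner 𝕜 u e = 0 := by
  have : FiniteDimensional 𝕜 V := Module.finite_of_finrank_pos (by omega)
  have hker : LinearMap.ker ((innerₛₗ 𝕜 e).comp V.subtype) ≠ ⊥ :=
    LinearMap.ker_ne_bot_of_finrank_lt (by rw [Module.finrank_self]; omega)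
  obtain ⟨u, hu, hu0⟩ := Submodule.exists_mem_ne_zero_of_ne_bot hker
  refine ⟨u, u.2, by simpa using hu0, inner_eq_zero_symm.mp ?_⟩
  simpa using hu

theorem real_inner_sub_smul_sub_smul_of_norm_eq_one {E : Type*} [NormedAddCommGroup E]
    [InnerProductSpace ℝ E] {e : E} (he : ‖e‖ = 1) (v w : E) :
    ⟪v - ⟪v, e⟫ • e, w - ⟪w, e⟫ • e⟫ = ⟪v, w⟫ - ⟪v, e⟫ * ⟪w, e⟫ := by
  have hee : ⟪e, e⟫ = 1 := by rw [real_inner_self_eq_norm_sq, he, one_pow]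
  simp only [inner_sub_left, inner_sub_right, real_inner_smul_left, real_inner_smul_right,
    hee, real_inner_comm e]
  ring

theorem stmt_5_general {E : Type*} [NormedAddCommGroup E] [InnerProductSpace ℝ E]
    (H V : Submodule ℝ E) (hV2 : 2 ≤ Module.finrank ℝ V)
    (X₀ : E) (hX₀ : X₀ ∈ H) (hX₀n : ‖X₀‖ = 1)
    (e : E) (hen : ‖e‖ = 1)
    (βt γt : E →ₗ[ℝ] E →ₗ[ℝ] ℝ)
    (δ : ℝ) (hδ : δ ≠ 0)
    (hmain : ∀ Y ∈ H, ∀ Z ∈ H, ∀ v ∈ V, ∀ w ∈ V,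
      βt Y Z * (γt v w - ⟪v, w⟫ * γt e e) =
        δ * ⟪Y, X₀⟫ * ⟪Z, X₀⟫ *
          ⟪v - ⟪v, e⟫ • e, w - ⟪w, e⟫ • e⟫) :
    βt X₀ X₀ ≠ 0 ∧
    (∀ Y ∈ H, ∀ Z ∈ H, βt Y Z = ⟪Y, X₀⟫ * ⟪Z, X₀⟫ * βt X₀ X₀) ∧
    (∀ v ∈ V, ∀ w ∈ V, βt X₀ X₀ * γt v w =
      ⟪v, w⟫ * (βt X₀ X₀ * γt e e + δ) - δ * ⟪v, e⟫ * ⟪w, e⟫) := by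
  have hX₀X₀ : ⟪X₀, X₀⟫ = 1 := by rw [real_inner_self_eq_norm_sq, hX₀n, one_pow]
  obtain ⟨u, huV, hu0, hue⟩ := V.exists_mem_ne_zero_inner_eq_zero hV2 e
  have hu : ∀ Y ∈ H, ∀ Z ∈ H,
      βt Y Z * (γt u u - ⟪u, u⟫ * γt e e) = δ * ⟪Y, X₀⟫ * ⟪Z, X₀⟫ * ⟪u, u⟫ := by
    intro Y hY Z hZ
    simpa only [hue, zero_smul, sub_zero] using hmain Y hY Z hZ u huV u huV
  have hX₀u : βt X₀ X₀ * (γt u u - ⟪u, u⟫ * γt e e) = δ * ⟪u, u⟫ := by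
    simpa only [hX₀X₀, mul_one] using hu X₀ hX₀ X₀ hX₀
  have hne : βt X₀ X₀ * (γt u u - ⟪u, u⟫ * γt e e) ≠ 0 :=
    hX₀u ▸ mul_ne_zero hδ (inner_self_ne_zero.mpr hu0)
  refine ⟨left_ne_zero_of_mul hne, fun Y hY Z hZ => ?_, fun v hv w hw => ?_⟩
  · apply mul_right_cancel₀ (right_ne_zero_of_mul hne)
    linear_combination hu Y hY Z hZ - ⟪Y, X₀⟫ * ⟪Z, X₀⟫ * hX₀u
  · have hX₀vw := hmain X₀ hX₀ X₀ hX₀ v hv w hw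
    rw [hX₀X₀, real_inner_sub_smul_sub_smul_of_norm_eq_one hen] at hX₀vw
    linear_combination hX₀vw

/-- Proposition 3.4(ii) (type B₂): if `dim V ≥ 2`, `δ ≠ 0` and
`β̃(Y,Z)(γ̃(V,W) − ⟨V,W⟩γ̃₀) = δ⟨Y,X₀⟩⟨Z,X₀⟩⟨PV,PW⟩` where `P` is the
orthogonal projection onto `{e}ᗮ` in `V`, then `β̃₀ ≠ 0`,
`β̃(Y,Z) = ⟨Y,X₀⟩⟨Z,X₀⟩β̃₀` and
`β̃₀ γ̃(V,W) = ⟨V,W⟩(β̃₀γ̃₀ + δ) − δ⟨V,e⟩⟨W,e⟩`. -/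
theorem stmt_5 {E : Type*} [NormedAddCommGroup E] [InnerProductSpace ℝ E]
    (H V : Submodule ℝ E) (hV2 : 2 ≤ Module.finrank ℝ V)
    (X₀ : E) (hX₀ : X₀ ∈ H) (hX₀n : ‖X₀‖ = 1)
    (e : E) (he : e ∈ V) (hen : ‖e‖ = 1)
    (βt γt : E →ₗ[ℝ] E →ₗ[ℝ] ℝ)
    (hβsymm : ∀ Y Z : E, βt Y Z = βt Z Y)
    (hγsymm : ∀ v w : E, γt v w = γt w v)
    (δ : ℝ) (hδ : δ ≠ 0)
    (hmain : ∀ Y ∈ H, ∀ Z ∈ H, ∀ v ∈ V, ∀ w ∈ V,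
      βt Y Z * (γt v w - ⟪v, w⟫ * γt e e) =
        δ * ⟪Y, X₀⟫ * ⟪Z, X₀⟫ *
          ⟪v - ⟪v, e⟫ • e, w - ⟪w, e⟫ • e⟫) :
    βt X₀ X₀ ≠ 0 ∧
    (∀ Y ∈ H, ∀ Z ∈ H, βt Y Z = ⟪Y, X₀⟫ * ⟪Z, X₀⟫ * βt X₀ X₀) ∧
    (∀ v ∈ V, ∀ w ∈ V, βt X₀ X₀ * γt v w =
      ⟪v, w⟫ * (βt X₀ X₀ * γt e e + δ) - δ * ⟪v, e⟫ * ⟪w, e⟫) :=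
  stmt_5_general H V hV2 X₀ hX₀ hX₀n e hen βt γt δ hδ hmain
end

section
/- Let V, W be finite-dimensional real inner product spaces and α : V × V → W a symmetric bilinear map with dim W = 2. Suppose there exist nonzero vectors v₁, v₂ ∈ V with α(v₁,v₂) = 0, ⟨α(v₁,v₁),α(v₂,v₂)⟩ = 0, and suppose moreover that ⟨α(Y,Z),α(X,v_j)⟩ = ⟨α(Y,v_j),α(X,Z)⟩ for all X,Y,Z ∈ V and j = 1,2, that the vectors η₁ = α(X,v₁) and η₂ = α(X,v₂) are orthonormal for some fixed X, and that ⟨α(Z,v₂),α(Y,v₁)⟩ = 0 for all Y,Z ∈ V. Then the curvature-like expression C(Y₁,Y₂,Y₃,Y₄) = ⟨α(Y₁,Y₄),α(Y₂,Y₃)⟩ − ⟨α(Y₁,Y₃),α(Y₂,Y₄)⟩ vanishes identically on V. -/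
open scoped RealInnerProductSpace

namespace OrthonormalBasis

variable {ι E : Type*} [Fintype ι] [NormedAddCommGroup E] [InnerProductSpace ℝ E]

theorem inner_eq_inner_mul_inner_of_inner_eq_zero (b : OrthonormalBasis ι ℝ E) {x : E} {j : ι}
    (hx : ∀ i ≠ j, ⟪x, b i⟫ = 0) (y : E) : ⟪x, y⟫ = ⟪x, b j⟫ * ⟪b j, y⟫ := by
  rw [← b.sum_inner_mul_inner, Finset.sum_eq_single j (fun i _ hi => by rw [hx i hi, zero_mul])
    (fun h => absurd (Finset.mem_univ j) h)]

/-- Expanded in `b`, the expression is a sum of determinants of the rank-one forms `f i ⊗ g i`. -/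
theorem inner_sub_inner_eq_zero_of_inner_eq_mul {V : Type*} (b : OrthonormalBasis ι ℝ E)
    (B : V → V → E) (f g : ι → V → ℝ) (hB : ∀ i Y Z, ⟪B Y Z, b i⟫ = f i Y * g i Z)
    (Y₁ Y₂ Y₃ Y₄ : V) : ⟪B Y₁ Y₄, B Y₂ Y₃⟫ - ⟪B Y₁ Y₃, B Y₂ Y₄⟫ = 0 := by
  rw [← b.sum_inner_mul_inner (B Y₁ Y₄), ← b.sum_inner_mul_inner (B Y₁ Y₃),
    ← Finset.sum_sub_distrib]
  refine Finset.sum_eq_zero fun i _ => ?_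
  rw [real_inner_comm (B Y₂ Y₃), real_inner_comm (B Y₂ Y₄), hB, hB, hB, hB]
  ring

end OrthonormalBasis

theorem stmt_10_general {V W : Type*}
    [NormedAddCommGroup V] [InnerProductSpace ℝ V]
    [NormedAddCommGroup W] [InnerProductSpace ℝ W]
    (hW2 : Module.finrank ℝ W = 2)
    (α : V →ₗ[ℝ] V →ₗ[ℝ] W)
    (v₁ v₂ : V)
    (X : V)
    (hsym : ∀ Y Z X' : V,
      ⟪α Y Z, α X' v₁⟫ = ⟪α Y v₁, α X' Z⟫ ∧
      ⟪α Y Z, α X' v₂⟫ = ⟪α Y v₂, α X' Z⟫)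
    (hη₁ : ‖α X v₁‖ = 1) (hη₂ : ‖α X v₂‖ = 1)
    (horth : ∀ Y Z : V, ⟪α Z v₂, α Y v₁⟫ = 0) :
    ∀ Y₁ Y₂ Y₃ Y₄ : V,
      ⟪α Y₁ Y₄, α Y₂ Y₃⟫ - ⟪α Y₁ Y₃, α Y₂ Y₄⟫ = 0 := by
  set v : Fin 2 → V := ![v₁, v₂]
  have hon : Orthonormal ℝ ![α X v₁, α X v₂] := by
    simp [hη₁, hη₂, (real_inner_comm _ _).trans (horth X X)]
  let b := (basisOfOrthonormalOfCardEqFinrank hon (by simp [hW2])).toOrthonormalBasis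
    (by simpa using hon)
  have hb : ∀ i, b i = α X (v i) := by
    intro i; fin_cases i <;> simp [b, v]
  have hsym' : ∀ i Y Z, ⟪α Y Z, α X (v i)⟫ = ⟪α Y (v i), α X Z⟫ := by
    intro i Y Z; fin_cases i
    exacts [(hsym Y Z X).1, (hsym Y Z X).2]
  have hcross : ∀ i k, k ≠ i → ∀ Y, ⟪α Y (v i), α X (v k)⟫ = 0 := by
    intro i k hki Y; fin_cases i <;> fin_cases k <;> simp at hki
    exacts [real_inner_comm (α Y v₁) _ ▸ horth Y X, horth X Y]
  -- the Gauss-type symmetry makes each component of `α` along `b i` a rank-one form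
  refine b.inner_sub_inner_eq_zero_of_inner_eq_mul (fun Y Z => α Y Z)
    (fun i Y => ⟪α Y (v i), b i⟫) (fun i Z => ⟪b i, α X Z⟫) fun i Y Z => ?_
  rw [hb, hsym', ← hb]
  exact b.inner_eq_inner_mul_inner_of_inner_eq_zero (fun k hk => hb k ▸ hcross i k hk Y) _

/-- Concluding algebraic step of Case 2 of Proposition 5.1: with nonzero
vectors `v₁, v₂` satisfying `α(v₁,v₂) = 0`, `⟨α(v₁,v₁),α(v₂,v₂)⟩ = 0`, the
Gauss-type symmetry `⟨α(Y,Z),α(X,v_j)⟩ = ⟨α(Y,v_j),α(X,Z)⟩`, orthonormality of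
`η₁ = α(X,v₁)`, `η₂ = α(X,v₂)` for a fixed `X`, and
`⟨α(Z,v₂),α(Y,v₁)⟩ = 0` for all `Y, Z`, the curvature-like expression
`C(Y₁,Y₂,Y₃,Y₄) = ⟨α(Y₁,Y₄),α(Y₂,Y₃)⟩ − ⟨α(Y₁,Y₃),α(Y₂,Y₄)⟩` vanishes. -/
theorem stmt_10 {V W : Type*}
    [NormedAddCommGroup V] [InnerProductSpace ℝ V] [FiniteDimensional ℝ V]
    [NormedAddCommGroup W] [InnerProductSpace ℝ W] [FiniteDimensional ℝ W]
    (hW2 : Module.finrank ℝ W = 2)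
    (α : V →ₗ[ℝ] V →ₗ[ℝ] W)
    (hαsymm : ∀ u v : V, α u v = α v u)
    (v₁ v₂ : V) (hv₁ : v₁ ≠ 0) (hv₂ : v₂ ≠ 0)
    (h0 : α v₁ v₂ = 0) (hperp : ⟪α v₁ v₁, α v₂ v₂⟫ = 0)
    (X : V)
    (hsym : ∀ Y Z X' : V,
      ⟪α Y Z, α X' v₁⟫ = ⟪α Y v₁, α X' Z⟫ ∧
      ⟪α Y Z, α X' v₂⟫ = ⟪α Y v₂, α X' Z⟫)
    (hη₁ : ‖α X v₁‖ = 1) (hη₂ : ‖α X v₂‖ = 1)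
    (horth : ∀ Y Z : V, ⟪α Z v₂, α Y v₁⟫ = 0) :
    ∀ Y₁ Y₂ Y₃ Y₄ : V,
      ⟪α Y₁ Y₄, α Y₂ Y₃⟫ - ⟪α Y₁ Y₃, α Y₂ Y₄⟫ = 0 :=
  stmt_10_general hW2 α v₁ v₂ X hsym hη₁ hη₂ horth
end

section
/- Let f : L ×_ρ M → Q_c^{p+n+2} be an isometric immersion of a warped product with n = dim M ≥ 3, and suppose at a point z the subspace α(H_z, V_z) has dimension at least 2 (type C). Then the warped product has constant sectional curvature c at z, i.e. the curvature-like tensor C(E₁,E₂,E₃,E₄) = ⟨R(E₁,E₂)E₃,E₄⟩ − c⟨(E₁∧E₂)E₃,E₄⟩ vanishes on T_zN. -/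
open scoped RealInnerProductSpace

set_option linter.unusedSectionVars false


section AuxW

variable {W : Type*} [NormedAddCommGroup W] [InnerProductSpace ℝ W] [FiniteDimensional ℝ W]

lemma span2 (hW2 : Module.finrank ℝ W = 2) (x y : W)
    (h : ⟪x, x⟫ * ⟪y, y⟫ - ⟪x, y⟫ * ⟪x, y⟫ ≠ 0) (w : W) :
    ∃ a b : ℝ, w = a • x + b • y := by
  have hdep : ¬ LinearIndependent ℝ ![x, y, w] := by
    intro hli
    have h3 := hli.fintype_card_le_finrank
    rw [hW2] at h3
    simp at h3
  rw [Fintype.not_linearIndependent_iff] at hdep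
  obtain ⟨g, hsum, i, hi⟩ := hdep
  have hsum' : g 0 • x + g 1 • y + g 2 • w = 0 := by
    have h4 := hsum
    simpa [Fin.sum_univ_three] using h4
  by_cases hg2 : g 2 = 0
  · exfalso
    rw [hg2, zero_smul, add_zero] at hsum'
    have e1 := congrArg (fun z => ⟪z, x⟫) hsum'
    have e2 := congrArg (fun z => ⟪z, y⟫) hsum'
    simp only [inner_add_left, real_inner_smul_left, inner_zero_left] at e1 e2
    rw [real_inner_comm x y] at e1
    have hg0 : g 0 * (⟪x, x⟫ * ⟪y, y⟫ - ⟪x, y⟫ * ⟪x, y⟫) = 0 := by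
      linear_combination ⟪y, y⟫ * e1 - ⟪x, y⟫ * e2
    have hg1 : g 1 * (⟪x, x⟫ * ⟪y, y⟫ - ⟪x, y⟫ * ⟪x, y⟫) = 0 := by
      linear_combination ⟪x, x⟫ * e2 - ⟪x, y⟫ * e1
    have hg0' : g 0 = 0 := by
      rcases mul_eq_zero.mp hg0 with h' | h'
      · exact h'
      · exact absurd h' h
    have hg1' : g 1 = 0 := by
      rcases mul_eq_zero.mp hg1 with h' | h'
      · exact h'
      · exact absurd h' h
    fin_cases i <;> simp_all
  · refine ⟨-(g 0) / g 2, -(g 1) / g 2, ?_⟩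
    have hw : g 2 • w - ((-(g 0)) • x + (-(g 1)) • y) = 0 := by
      rw [← hsum']; module
    have h2 : g 2 • w = (-(g 0)) • x + (-(g 1)) • y := by rwa [sub_eq_zero] at hw
    apply smul_right_injective W hg2
    show g 2 • w = g 2 • ((-(g 0) / g 2) • x + (-(g 1) / g 2) • y)
    rw [h2, smul_add, smul_smul, smul_smul]
    match_scalars <;> field_simp <;> ring

lemma orth2 (hW2 : Module.finrank ℝ W = 2) (x y : W)
    (h : ⟪x, x⟫ * ⟪y, y⟫ - ⟪x, y⟫ * ⟪x, y⟫ ≠ 0) (w : W)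
    (h1 : ⟪w, x⟫ = 0) (h2 : ⟪w, y⟫ = 0) : w = 0 := by
  obtain ⟨a, b, hw⟩ := span2 hW2 x y h w
  have h3 : ⟪w, w⟫ = 0 := by
    nth_rewrite 2 [hw]
    rw [inner_add_right, real_inner_smul_right, real_inner_smul_right, h1, h2]
    ring
  exact inner_self_eq_zero.mp h3

lemma CSE (x y : W) (hx : x ≠ 0)
    (h : ⟪x, x⟫ * ⟪y, y⟫ - ⟪x, y⟫ * ⟪x, y⟫ = 0) :
    y = (⟪x, y⟫ / ⟪x, x⟫) • x := by
  have hxx : ⟪x, x⟫ ≠ 0 := fun h0 => hx (inner_self_eq_zero.mp h0)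
  have hz : (⟪x, x⟫ • y - ⟪x, y⟫ • x) = 0 := by
    have h5 : ⟪⟪x, x⟫ • y - ⟪x, y⟫ • x, ⟪x, x⟫ • y - ⟪x, y⟫ • x⟫ = 0 := by
      simp only [inner_sub_left, inner_sub_right, real_inner_smul_left, real_inner_smul_right]
      rw [real_inner_comm x y]
      linear_combination ⟪x, x⟫ * h
    exact inner_self_eq_zero.mp h5
  have h2 : ⟪x, x⟫ • y = ⟪x, y⟫ • x := by rwa [sub_eq_zero] at hz
  apply smul_right_injective W hxx
  show ⟪x, x⟫ • y = ⟪x, x⟫ • ((⟪x, y⟫ / ⟪x, x⟫) • x)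
  rw [h2, smul_smul]
  congr 1
  field_simp

end AuxW

section AuxW2

variable {W : Type*} [NormedAddCommGroup W] [InnerProductSpace ℝ W] [FiniteDimensional ℝ W]

lemma keyIdentity (hW2 : Module.finrank ℝ W = 2) (ξ₁ ξ₂ P Q R g : W)
    (hgram : ⟪ξ₁, ξ₁⟫ * ⟪ξ₂, ξ₂⟫ - ⟪ξ₁, ξ₂⟫ * ⟪ξ₁, ξ₂⟫ ≠ 0)
    (s1 : ⟪P, ξ₂⟫ = ⟪Q, ξ₁⟫) (s2 : ⟪Q, ξ₂⟫ = ⟪R, ξ₁⟫)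
    (e1 : ⟪g, P⟫ = ⟪ξ₁, ξ₁⟫) (e2 : ⟪g, Q⟫ = ⟪ξ₁, ξ₂⟫) (e3 : ⟪g, R⟫ = ⟪ξ₂, ξ₂⟫) :
    ⟪P, R⟫ = ⟪Q, Q⟫ := by
  obtain ⟨p1, p2, hP⟩ := span2 hW2 ξ₁ ξ₂ hgram P
  obtain ⟨q1, q2, hQ⟩ := span2 hW2 ξ₁ ξ₂ hgram Q
  obtain ⟨r1, r2, hR⟩ := span2 hW2 ξ₁ ξ₂ hgram R
  obtain ⟨g1, g2, hg⟩ := span2 hW2 ξ₁ ξ₂ hgram g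
  subst hP hQ hR hg
  simp only [inner_add_left, inner_add_right, real_inner_smul_left, real_inner_smul_right,
    real_inner_comm ξ₁ ξ₂] at s1 s2 e1 e2 e3 ⊢
  set G11 : ℝ := ⟪ξ₁, ξ₁⟫ with hG11
  set G12 : ℝ := ⟪ξ₁, ξ₂⟫ with hG12
  set G22 : ℝ := ⟪ξ₂, ξ₂⟫ with hG22
  have main : (G11 * G22 - G12 * G12) *
      ((p1*r1*G11 + (p1*r2 + p2*r1)*G12 + p2*r2*G22)
        - (q1*q1*G11 + 2*q1*q2*G12 + q2*q2*G22)) = 0 := by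
    linear_combination
      ((-1)*q2*G12*G22 + (-2)*q1*G12*G12 + (1)*q1*G11*G22 + (1)*p2*G22*G22 + (1)*p2*r2*g1*G12*G22 + (1)*p2*r1*g1*G12*G12 + (-1)*p2*q2*g1*G22*G22 + (-1)*p2*q1*g1*G12*G22 + (1)*p1*G12*G22 + (1)*p1*r2*g1*G11*G22 + (1)*p1*r1*g1*G11*G12 + (-1)*p1*q2*g1*G12*G22 + (-1)*p1*q1*g1*G12*G12) * s1
      + ((-1)*p2*q2*g1*G12*G22 + (-1)*p2*q1*g1*G12*G12 + (1)*p2*p2*g1*G22*G22 + (1)*p1*G12*G12 + (-1)*p1*G11*G22 + (-1)*p1*q2*g1*G11*G22 + (-1)*p1*q1*g1*G11*G12 + (2)*p1*p2*g1*G12*G22 + (1)*p1*p1*g1*G12*G12) * s2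
      + ((1)*q2*q2*G22*G22 + (2)*q1*q2*G12*G22 + (1)*q1*q1*G12*G12 + (-1)*p2*r2*G22*G22 + (-1)*p2*r1*G12*G22 + (-1)*p1*r2*G12*G22 + (-1)*p1*r1*G12*G12) * e1
      + ((1)*p2*r2*G12*G22 + (1)*p2*r1*G12*G12 + (-1)*p2*q2*G22*G22 + (-1)*p2*q1*G12*G22 + (1)*p1*r2*G11*G22 + (1)*p1*r1*G11*G12 + (-1)*p1*q2*G12*G22 + (-1)*p1*q1*G12*G12) * e2
      + ((-1)*p2*q2*G12*G22 + (-1)*p2*q1*G12*G12 + (1)*p2*p2*G22*G22 + (-1)*p1*q2*G11*G22 + (-1)*p1*q1*G11*G12 + (2)*p1*p2*G12*G22 + (1)*p1*p1*G12*G12) * e3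
  rcases mul_eq_zero.mp main with h' | h'
  · exact absurd h' hgram
  · linear_combination h'

lemma finred (A B Cv : W) (h0 : ⟪A, Cv⟫ = ⟪B, B⟫) (a1 b1 a2 b2 a3 b3 a4 b4 : ℝ) :
    ⟪(a1*a4) • A + (a1*b4 + b1*a4) • B + (b1*b4) • Cv,
      (a2*a3) • A + (a2*b3 + b2*a3) • B + (b2*b3) • Cv⟫ =
    (⟪(a1*a3) • A + (a1*b3 + b1*a3) • B + (b1*b3) • Cv,
      (a2*a4) • A + (a2*b4 + b2*a4) • B + (b2*b4) • Cv⟫ : ℝ) := by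
  simp only [inner_add_left, inner_add_right, real_inner_smul_left, real_inner_smul_right,
    real_inner_comm A B, real_inner_comm A Cv, real_inner_comm B Cv]
  linear_combination (-(a1*b2 - b1*a2)*(a3*b4 - b3*a4)) * h0

end AuxW2

section AuxE

variable {E W : Type*} [NormedAddCommGroup E] [InnerProductSpace ℝ E]
  [NormedAddCommGroup W] [InnerProductSpace ℝ W]

lemma alpha_expand (α : E →ₗ[ℝ] E →ₗ[ℝ] W) (u v s z s0 z0 : E) (a1 b1 a4 b4 : ℝ)
    (hvu : α v u = α u v)
    (hs : s = a1 • u + b1 • v + s0) (hz : z = a4 • u + b4 • v + z0)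
    (h1 : α s0 u = 0) (h2 : α s0 v = 0) (h3 : α u z0 = 0) (h4 : α v z0 = 0)
    (h5 : α s0 z0 = 0) :
    α s z = (a1*a4) • (α u u) + (a1*b4 + b1*a4) • (α u v) + (b1*b4) • (α v v) := by
  subst hs hz
  simp only [map_add, map_smul, LinearMap.add_apply, LinearMap.smul_apply, h1, h2, h3, h4, h5,
    hvu, smul_zero, add_zero, zero_add]
  module

end AuxE

set_option maxHeartbeats 4000000

/-- Proposition 5.1 (pointwise): for a codimension-two immersion of a warped
product with `dim V ≥ 3`, if the point is of type C, i.e.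
`dim α(H,V) ≥ 2`, then the warped product has constant sectional curvature `c`
at the point: the curvature-like tensor `C` (related to `α` by the Gauss
equation `hGauss` and to the warped-product structure by (2.6)–(2.9)) vanishes
identically. -/
theorem stmt_12 {E W : Type*}
    [NormedAddCommGroup E] [InnerProductSpace ℝ E]
    [NormedAddCommGroup W] [InnerProductSpace ℝ W] [FiniteDimensional ℝ W]
    (H V : Submodule ℝ E)
    (horth : ∀ x ∈ H, ∀ v ∈ V, ⟪x, v⟫ = 0)
    (hsup : H ⊔ V = ⊤)
    (hV3 : 3 ≤ Module.finrank ℝ V)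
    (hW2 : Module.finrank ℝ W = 2)
    (α : E →ₗ[ℝ] E →ₗ[ℝ] W)
    (hαsymm : ∀ u v : E, α u v = α v u)
    (C : E → E → E → E → ℝ)
    (hGauss : ∀ a b u v : E,
      C a b u v = ⟪α a v, α b u⟫ - ⟪α a u, α b v⟫)
    (φ : E →ₗ[ℝ] E →ₗ[ℝ] ℝ)
    (hC1 : ∀ X ∈ H, ∀ v ∈ V, ∀ w ∈ V, ∀ Y ∈ H,
      C X v w Y = ⟪v, w⟫ * φ X Y)
    (hC2 : ∀ X ∈ H, ∀ Y ∈ H, ∀ v ∈ V, ∀ Z ∈ H, C X Y v Z = 0)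
    (hC3 : ∀ X ∈ H, ∀ Y ∈ H, ∀ v ∈ V, ∀ w ∈ V, C X Y v w = 0)
    (hC4 : ∀ X ∈ H, ∀ u ∈ V, ∀ v ∈ V, ∀ w ∈ V, C X u v w = 0)
    (htypeC : 2 ≤ Module.finrank ℝ
      (Submodule.span ℝ {w : W | ∃ Y ∈ H, ∃ v ∈ V, α Y v = w})) :
    ∀ a b u v : E, C a b u v = 0 := by
  classical
  -- ### basic consequences of the Gauss equation and (2.6)–(2.9)
  have flat : ∀ X ∈ H, ∀ Y ∈ H, ∀ u ∈ V, ∀ v ∈ V,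
      ⟪α X u, α Y v⟫ = ⟪α X v, α Y u⟫ := by
    intro X hX Y hY u hu v hv
    have h := hC3 X hX Y hY u hu v hv
    rw [hGauss] at h; linarith
  have M2 : ∀ X ∈ H, ∀ Y ∈ H, ∀ Z ∈ H, ∀ v ∈ V,
      ⟪α X Z, α Y v⟫ = ⟪α X v, α Y Z⟫ := by
    intro X hX Y hY Z hZ v hv
    have h := hC2 X hX Y hY v hv Z hZ
    rw [hGauss] at h; linarith
  have M4 : ∀ X ∈ H, ∀ u ∈ V, ∀ v ∈ V, ∀ w ∈ V,
      ⟪α X w, α u v⟫ = ⟪α X v, α u w⟫ := by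
    intro X hX u hu v hv w hw
    have h := hC4 X hX u hu v hv w hw
    rw [hGauss] at h; linarith
  -- ### the span of the mixed values of α is all of W
  have hStop : Submodule.span ℝ {w : W | ∃ Y ∈ H, ∃ v ∈ V, α Y v = w} = ⊤ := by
    apply Submodule.eq_top_of_finrank_eq
    rw [hW2]
    refine le_antisymm ?_ htypeC
    calc Module.finrank ℝ (Submodule.span ℝ {w : W | ∃ Y ∈ H, ∃ v ∈ V, α Y v = w})
        ≤ Module.finrank ℝ W := Submodule.finrank_le _
      _ = 2 := hW2
  have spanW : ∀ w : W, (∀ Y ∈ H, ∀ v ∈ V, ⟪w, α Y v⟫ = 0) → w = 0 := by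
    intro w hw
    have hmem : w ∈ Submodule.span ℝ {w : W | ∃ Y ∈ H, ∃ v ∈ V, α Y v = w} := by
      rw [hStop]; exact Submodule.mem_top
    have hz : ∀ x ∈ Submodule.span ℝ {w : W | ∃ Y ∈ H, ∃ v ∈ V, α Y v = w},
        ⟪w, x⟫ = 0 := by
      intro x hx
      induction hx using Submodule.span_induction with
      | mem x hx => obtain ⟨Y, hY, v, hv, rfl⟩ := hx; exact hw Y hY v hv
      | zero => simp
      | add x y _ _ hx hy => rw [inner_add_right, hx, hy]; ring
      | smul a x _ hx => rw [real_inner_smul_right, hx]; ring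
    exact inner_self_eq_zero.mp (hz w hmem)
  -- ### null vectors
  have deltaNull : ∀ v₀ ∈ V, (∀ Y ∈ H, α Y v₀ = 0) → ∀ u ∈ V, α u v₀ = 0 := by
    intro v₀ hv₀ hnull u hu
    apply spanW
    intro Y hY w hw
    have h := M4 Y hY u hu v₀ hv₀ w hw
    rw [hnull Y hY] at h
    rw [real_inner_comm (α Y w) (α u v₀), h, inner_zero_left]
  have gammaNull : ∀ X₀ ∈ H, (∀ v ∈ V, α X₀ v = 0) → ∀ Z ∈ H, α X₀ Z = 0 := by
    intro X₀ hX₀ hnull Z hZ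
    apply spanW
    intro Y hY v hv
    have h := M2 X₀ hX₀ Y hY Z hZ v hv
    rw [hnull v hv] at h
    rw [h, inner_zero_left]
  -- ### extraction of two independent mixed values
  have EX : ∃ X₁, X₁ ∈ H ∧ ∃ u₁, u₁ ∈ V ∧ ∃ X₂, X₂ ∈ H ∧ ∃ u₂, u₂ ∈ V ∧
      ⟪α X₁ u₁, α X₁ u₁⟫ * ⟪α X₂ u₂, α X₂ u₂⟫
        - ⟪α X₁ u₁, α X₂ u₂⟫ * ⟪α X₁ u₁, α X₂ u₂⟫ ≠ 0 := by
    by_cases hz : ∀ Y ∈ H, ∀ v ∈ V, α Y v = 0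
    · exfalso
      have hle : Submodule.span ℝ {w : W | ∃ Y ∈ H, ∃ v ∈ V, α Y v = w} ≤ ⊥ := by
        rw [Submodule.span_le]
        rintro w ⟨Y, hY, v, hv, rfl⟩
        simp [hz Y hY v hv]
      rw [le_bot_iff] at hle
      rw [hle, finrank_bot] at htypeC
      omega
    · push_neg at hz
      obtain ⟨Y₀, hY₀, v₀, hv₀, hζ⟩ := hz
      by_contra hcon
      push_neg at hcon
      have hsub : {w : W | ∃ Y ∈ H, ∃ v ∈ V, α Y v = w} ⊆
          (Submodule.span ℝ {α Y₀ v₀} : Submodule ℝ W) := by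
        rintro w ⟨Y, hY, v, hv, rfl⟩
        have hg := hcon Y₀ hY₀ v₀ hv₀ Y hY v hv
        have := CSE (α Y₀ v₀) (α Y v) hζ hg
        rw [this]
        exact Submodule.smul_mem _ _ (Submodule.mem_span_singleton_self _)
      have hle := Submodule.span_le.mpr hsub
      have h1 := Submodule.finrank_mono hle
      rw [finrank_span_singleton hζ] at h1
      omega
  have kernelV : ∀ (X₁ X₂ : E) (ξ₁ ξ₂ : W),
      ∃ v₀, v₀ ∈ V ∧ v₀ ≠ 0 ∧ ⟪α X₁ v₀, ξ₁⟫ = 0 ∧ ⟪α X₂ v₀, ξ₂⟫ = 0 := by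
    intro X₁ X₂ ξ₁ ξ₂
    haveI : FiniteDimensional ℝ V := FiniteDimensional.of_finrank_pos (by omega)
    set f1 : E →ₗ[ℝ] ℝ :=
      { toFun := fun t => ⟪α X₁ t, ξ₁⟫
        map_add' := by intro x y; simp [map_add, inner_add_left]
        map_smul' := by intro c x; simp [map_smul, real_inner_smul_left] } with hf1
    set f2 : E →ₗ[ℝ] ℝ :=
      { toFun := fun t => ⟪α X₂ t, ξ₂⟫
        map_add' := by intro x y; simp [map_add, inner_add_left]
        map_smul' := by intro c x; simp [map_smul, real_inner_smul_left] } with hf2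
    set Λ : V →ₗ[ℝ] ℝ × ℝ := (f1.comp V.subtype).prod (f2.comp V.subtype) with hΛ
    have hker : LinearMap.ker Λ ≠ ⊥ := by
      intro hbot
      have h5 := LinearMap.finrank_range_add_finrank_ker Λ
      rw [hbot, finrank_bot, add_zero] at h5
      have h6 : Module.finrank ℝ (LinearMap.range Λ) ≤ Module.finrank ℝ (ℝ × ℝ) :=
        Submodule.finrank_le _
      rw [Module.finrank_prod, Module.finrank_self] at h6
      omega
    obtain ⟨x, hxker, hxne⟩ := Submodule.ne_bot_iff _ |>.mp hker
    have hx0 := LinearMap.mem_ker.mp hxker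
    have hx1 : f1 (x : E) = 0 := congrArg Prod.fst hx0
    have hx2 : f2 (x : E) = 0 := congrArg Prod.snd hx0
    exact ⟨(x : E), x.2, by simpa using hxne, hx1, hx2⟩
  have existsNullV : ∃ v₀, v₀ ∈ V ∧ v₀ ≠ 0 ∧ ∀ Y ∈ H, α Y v₀ = 0 := by
    by_cases hA : ∃ X, X ∈ H ∧ ∃ u, u ∈ V ∧ ∃ v, v ∈ V ∧
        ⟪α X u, α X u⟫ * ⟪α X v, α X v⟫ - ⟪α X u, α X v⟫ * ⟪α X u, α X v⟫ ≠ 0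
    · obtain ⟨X, hX, u, hu, v, hv, hgram⟩ := hA
      obtain ⟨v₀, hv₀V, hv₀ne, hk1, hk2⟩ := kernelV X X (α X u) (α X v)
      have hXv₀ : α X v₀ = 0 := orth2 hW2 (α X u) (α X v) hgram _ hk1 hk2
      refine ⟨v₀, hv₀V, hv₀ne, ?_⟩
      intro Y hY
      apply orth2 hW2 (α X u) (α X v) hgram
      · rw [flat Y hY X hX v₀ hv₀V u hu, hXv₀, inner_zero_right]
      · rw [flat Y hY X hX v₀ hv₀V v hv, hXv₀, inner_zero_right]
    · push_neg at hA
      obtain ⟨X₁, hX₁, u₁, hu₁, X₂, hX₂, u₂, hu₂, hgram⟩ := EX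
      have hξ₁ne : α X₁ u₁ ≠ 0 := by
        intro h0; rw [h0] at hgram; simp at hgram
      have hξ₂ne : α X₂ u₂ ≠ 0 := by
        intro h0; rw [h0] at hgram; simp at hgram
      obtain ⟨v₀, hv₀V, hv₀ne, hk1, hk2⟩ := kernelV X₁ X₂ (α X₁ u₁) (α X₂ u₂)
      have h1 : α X₁ v₀ = 0 := by
        have hF := CSE (α X₁ u₁) (α X₁ v₀) hξ₁ne (hA X₁ hX₁ u₁ hu₁ v₀ hv₀V)
        rw [hF, real_inner_comm (α X₁ v₀) (α X₁ u₁), hk1, zero_div, zero_smul]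
      have h2 : α X₂ v₀ = 0 := by
        have hF := CSE (α X₂ u₂) (α X₂ v₀) hξ₂ne ?_
        · rw [hF, real_inner_comm (α X₂ v₀) (α X₂ u₂), hk2, zero_div, zero_smul]
        · exact hA X₂ hX₂ u₂ hu₂ v₀ hv₀V
      refine ⟨v₀, hv₀V, hv₀ne, fun Y hY => orth2 hW2 (α X₁ u₁) (α X₂ u₂) hgram _ ?_ ?_⟩
      · rw [flat Y hY X₁ hX₁ v₀ hv₀V u₁ hu₁, h1, inner_zero_right]
      · rw [flat Y hY X₂ hX₂ v₀ hv₀V u₂ hu₂, h2, inner_zero_right]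
  have hphi : ∀ X ∈ H, ∀ Y ∈ H, φ X Y = 0 := by
    obtain ⟨v₀, hv₀V, hv₀ne, hnull⟩ := existsNullV
    intro X hX Y hY
    have hvv : α v₀ v₀ = 0 := deltaNull v₀ hv₀V hnull v₀ hv₀V
    have h := hC1 X hX v₀ hv₀V v₀ hv₀V Y hY
    rw [hGauss] at h
    have h' : ⟪v₀, v₀⟫ * φ X Y = 0 := by
      rw [← h, hvv, hnull X hX]; simp
    have hv₀i : ⟪v₀, v₀⟫ ≠ (0 : ℝ) := fun hq => hv₀ne (inner_self_eq_zero.mp hq)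
    exact (mul_eq_zero.mp h').resolve_left hv₀i
  -- ### vanishing on four vertical vectors
  have P2 : ∀ s ∈ V, ∀ t ∈ V, ∀ w ∈ V, ∀ z ∈ V, C s t w z = 0 := by
    have frame : ∃ u ∈ V, ∃ v ∈ V,
        (⟪α u u, α v v⟫ : ℝ) = ⟪α u v, α u v⟫ ∧
        ∀ t ∈ V, ∃ a b : ℝ, ∃ t₀, t₀ ∈ V ∧ t = a • u + b • v + t₀ ∧
          ∀ Y ∈ H, α Y t₀ = 0 := by
      by_cases hA : ∃ X, X ∈ H ∧ ∃ u, u ∈ V ∧ ∃ v, v ∈ V ∧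
          ⟪α X u, α X u⟫ * ⟪α X v, α X v⟫ - ⟪α X u, α X v⟫ * ⟪α X u, α X v⟫ ≠ 0
      · obtain ⟨X, hX, u, hu, v, hv, hgram⟩ := hA
        refine ⟨u, hu, v, hv, ?_, ?_⟩
        · apply keyIdentity hW2 (α X u) (α X v) (α u u) (α u v) (α v v) (α X X) hgram
          · have h := M4 X hX u hu u hu v hv
            rw [real_inner_comm (α u u) (α X v), real_inner_comm (α u v) (α X u)] at h
            exact h
          · have h := M4 X hX v hv u hu v hv
            rw [hαsymm v u] at h
            rw [real_inner_comm (α u v) (α X v), real_inner_comm (α v v) (α X u)] at h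
            exact h
          · have h := hC1 X hX u hu u hu X hX
            rw [hGauss, hphi X hX X hX, mul_zero, hαsymm u X] at h
            linarith
          · have h := hC1 X hX u hu v hv X hX
            rw [hGauss, hphi X hX X hX, mul_zero, hαsymm u X] at h
            rw [real_inner_comm (α X u) (α X v)] at h
            linarith
          · have h := hC1 X hX v hv v hv X hX
            rw [hGauss, hphi X hX X hX, mul_zero, hαsymm v X] at h
            linarith
        · intro t ht
          obtain ⟨a, b, hab⟩ := span2 hW2 (α X u) (α X v) hgram (α X t)
          have ht₀V : t - a • u - b • v ∈ V :=
            V.sub_mem (V.sub_mem ht (V.smul_mem a hu)) (V.smul_mem b hv)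
          have hXt0 : α X (t - a • u - b • v) = 0 := by
            rw [map_sub, map_sub, map_smul, map_smul, hab]; module
          refine ⟨a, b, t - a • u - b • v, ht₀V, by module, ?_⟩
          intro Y hY
          apply orth2 hW2 (α X u) (α X v) hgram
          · rw [flat Y hY X hX _ ht₀V u hu, hXt0, inner_zero_right]
          · rw [flat Y hY X hX _ ht₀V v hv, hXt0, inner_zero_right]
      · push_neg at hA
        obtain ⟨X₁, hX₁, u₁, hu₁, X₂, hX₂, u₂, hu₂, hgram⟩ := EX
        have hξ₁ne : α X₁ u₁ ≠ 0 := by intro h0; rw [h0] at hgram; simp at hgram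
        have hξ₂ne : α X₂ u₂ ≠ 0 := by intro h0; rw [h0] at hgram; simp at hgram
        have hi₁ : (⟪α X₁ u₁, α X₁ u₁⟫ : ℝ) ≠ 0 := fun hq => hξ₁ne (inner_self_eq_zero.mp hq)
        have hi₂ : (⟪α X₂ u₂, α X₂ u₂⟫ : ℝ) ≠ 0 := fun hq => hξ₂ne (inner_self_eq_zero.mp hq)
        set lam1 : E → ℝ := fun t => ⟪α X₁ u₁, α X₁ t⟫ / ⟪α X₁ u₁, α X₁ u₁⟫ with hlam1
        set lam2 : E → ℝ := fun t => ⟪α X₂ u₂, α X₂ t⟫ / ⟪α X₂ u₂, α X₂ u₂⟫ with hlam2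
        have F₁ : ∀ t ∈ V, α X₁ t = lam1 t • α X₁ u₁ := by
          intro t ht
          exact CSE (α X₁ u₁) (α X₁ t) hξ₁ne (hA X₁ hX₁ u₁ hu₁ t ht)
        have F₂ : ∀ t ∈ V, α X₂ t = lam2 t • α X₂ u₂ := by
          intro t ht
          exact CSE (α X₂ u₂) (α X₂ t) hξ₂ne (hA X₂ hX₂ u₂ hu₂ t ht)
        have hl1u1 : lam1 u₁ = 1 := div_self hi₁
        have hl2u2 : lam2 u₂ = 1 := div_self hi₂
        have lam1sub : ∀ x y : E, lam1 (x - y) = lam1 x - lam1 y := by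
          intro x y; simp only [hlam1]; rw [map_sub, inner_sub_right]; ring
        have lam1smul : ∀ (c : ℝ) (x : E), lam1 (c • x) = c * lam1 x := by
          intro c x; simp only [hlam1]; rw [map_smul, real_inner_smul_right]; ring
        have lam2sub : ∀ x y : E, lam2 (x - y) = lam2 x - lam2 y := by
          intro x y; simp only [hlam2]; rw [map_sub, inner_sub_right]; ring
        have lam2smul : ∀ (c : ℝ) (x : E), lam2 (c • x) = c * lam2 x := by
          intro c x; simp only [hlam2]; rw [map_smul, real_inner_smul_right]; ring
        by_cases hdep1 : ∀ t ∈ V, lam1 t = 0 → lam2 t = 0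
        · refine ⟨u₁, hu₁, u₁, hu₁, rfl, ?_⟩
          intro t ht
          have ht₀V : t - lam1 t • u₁ ∈ V := V.sub_mem ht (V.smul_mem _ hu₁)
          have hl1t0 : lam1 (t - lam1 t • u₁) = 0 := by
            rw [lam1sub, lam1smul, hl1u1]; ring
          have h1 : α X₁ (t - lam1 t • u₁) = 0 := by
            rw [F₁ _ ht₀V, hl1t0, zero_smul]
          have h2 : α X₂ (t - lam1 t • u₁) = 0 := by
            rw [F₂ _ ht₀V, hdep1 _ ht₀V hl1t0, zero_smul]
          refine ⟨lam1 t, 0, t - lam1 t • u₁, ht₀V, by module, ?_⟩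
          intro Y hY
          apply orth2 hW2 (α X₁ u₁) (α X₂ u₂) hgram
          · rw [flat Y hY X₁ hX₁ _ ht₀V u₁ hu₁, h1, inner_zero_right]
          · rw [flat Y hY X₂ hX₂ _ ht₀V u₂ hu₂, h2, inner_zero_right]
        · by_cases hdep2 : ∀ t ∈ V, lam2 t = 0 → lam1 t = 0
          · refine ⟨u₂, hu₂, u₂, hu₂, rfl, ?_⟩
            intro t ht
            have ht₀V : t - lam2 t • u₂ ∈ V := V.sub_mem ht (V.smul_mem _ hu₂)
            have hl2t0 : lam2 (t - lam2 t • u₂) = 0 := by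
              rw [lam2sub, lam2smul, hl2u2]; ring
            have h2 : α X₂ (t - lam2 t • u₂) = 0 := by
              rw [F₂ _ ht₀V, hl2t0, zero_smul]
            have h1 : α X₁ (t - lam2 t • u₂) = 0 := by
              rw [F₁ _ ht₀V, hdep2 _ ht₀V hl2t0, zero_smul]
            refine ⟨lam2 t, 0, t - lam2 t • u₂, ht₀V, by module, ?_⟩
            intro Y hY
            apply orth2 hW2 (α X₁ u₁) (α X₂ u₂) hgram
            · rw [flat Y hY X₁ hX₁ _ ht₀V u₁ hu₁, h1, inner_zero_right]
            · rw [flat Y hY X₂ hX₂ _ ht₀V u₂ hu₂, h2, inner_zero_right]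
          · push_neg at hdep1 hdep2
            obtain ⟨e₀, he₀V, hl1e₀, hl2e₀⟩ := hdep1
            obtain ⟨f₀, hf₀V, hl2f₀, hl1f₀⟩ := hdep2
            obtain ⟨e, heV, hl1e, hl2e⟩ : ∃ e, e ∈ V ∧ lam1 e = 0 ∧ lam2 e = 1 :=
              ⟨(lam2 e₀)⁻¹ • e₀, V.smul_mem _ he₀V,
                by rw [lam1smul, hl1e₀, mul_zero],
                by rw [lam2smul]; exact inv_mul_cancel₀ hl2e₀⟩
            obtain ⟨f, hfV, hl1f, hl2f⟩ : ∃ f, f ∈ V ∧ lam1 f = 1 ∧ lam2 f = 0 :=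
              ⟨(lam1 f₀)⁻¹ • f₀, V.smul_mem _ hf₀V,
                by rw [lam1smul]; exact inv_mul_cancel₀ hl1f₀,
                by rw [lam2smul, hl2f₀, mul_zero]⟩
            have hX1e : α X₁ e = 0 := by rw [F₁ e heV, hl1e, zero_smul]
            have hX2e : α X₂ e = α X₂ u₂ := by rw [F₂ e heV, hl2e, one_smul]
            have hX1f : α X₁ f = α X₁ u₁ := by rw [F₁ f hfV, hl1f, one_smul]
            have hX2f : α X₂ f = 0 := by rw [F₂ f hfV, hl2f, zero_smul]
            have horthξ : (⟪α X₁ u₁, α X₂ u₂⟫ : ℝ) = 0 := by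
              have h := flat X₁ hX₁ X₂ hX₂ f hfV e heV
              rw [hX1f, hX2e, hX1e, inner_zero_left] at h
              exact h
            have hPξ₁ : (⟪α e e, α X₁ u₁⟫ : ℝ) = 0 := by
              have h := M4 X₁ hX₁ e heV e heV f hfV
              rw [hX1f, hX1e, inner_zero_left] at h
              rw [real_inner_comm (α X₁ u₁) (α e e)]
              exact h
            have hQξ₁ : (⟪α e f, α X₁ u₁⟫ : ℝ) = 0 := by
              have h := M4 X₁ hX₁ f hfV e heV f hfV
              rw [hX1f, hX1e, inner_zero_left, hαsymm f e] at h
              rw [real_inner_comm (α X₁ u₁) (α e f)]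
              exact h
            have hQξ₂ : (⟪α e f, α X₂ u₂⟫ : ℝ) = 0 := by
              have h := M4 X₂ hX₂ e heV f hfV e heV
              rw [hX2e, hX2f, inner_zero_left] at h
              rw [real_inner_comm (α X₂ u₂) (α e f)]
              exact h
            have hRξ₂ : (⟪α f f, α X₂ u₂⟫ : ℝ) = 0 := by
              have h := M4 X₂ hX₂ f hfV f hfV e heV
              rw [hX2e, hX2f, inner_zero_left] at h
              rw [real_inner_comm (α X₂ u₂) (α f f)]
              exact h
            have hQ0 : α e f = 0 := orth2 hW2 _ _ hgram _ hQξ₁ hQξ₂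
            have h0 : (⟪α e e, α f f⟫ : ℝ) = ⟪α e f, α e f⟫ := by
              obtain ⟨aa, bb, hEE⟩ := span2 hW2 (α X₁ u₁) (α X₂ u₂) hgram (α e e)
              obtain ⟨cc, dd, hFF⟩ := span2 hW2 (α X₁ u₁) (α X₂ u₂) hgram (α f f)
              have haa : aa * ⟪α X₁ u₁, α X₁ u₁⟫ = 0 := by
                have h := hPξ₁
                rw [hEE] at h
                simp only [inner_add_left, real_inner_smul_left] at h
                rw [real_inner_comm (α X₁ u₁) (α X₂ u₂), horthξ, mul_zero, add_zero] at h
                exact h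
              have haa0 : aa = 0 := (mul_eq_zero.mp haa).resolve_right hi₁
              have hdd : dd * ⟪α X₂ u₂, α X₂ u₂⟫ = 0 := by
                have h := hRξ₂
                rw [hFF] at h
                simp only [inner_add_left, real_inner_smul_left] at h
                rw [horthξ, mul_zero, zero_add] at h
                exact h
              have hdd0 : dd = 0 := (mul_eq_zero.mp hdd).resolve_right hi₂
              rw [hEE, hFF, haa0, hdd0, hQ0]
              simp only [zero_smul, zero_add, add_zero, real_inner_smul_left,
                real_inner_smul_right, inner_zero_left]
              rw [real_inner_comm (α X₁ u₁) (α X₂ u₂), horthξ]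
              ring
            refine ⟨e, heV, f, hfV, h0, ?_⟩
            intro t ht
            have ht₀V : t - lam2 t • e - lam1 t • f ∈ V :=
              V.sub_mem (V.sub_mem ht (V.smul_mem _ heV)) (V.smul_mem _ hfV)
            have hl1t0 : lam1 (t - lam2 t • e - lam1 t • f) = 0 := by
              rw [lam1sub, lam1sub, lam1smul, lam1smul, hl1e, hl1f]; ring
            have hl2t0 : lam2 (t - lam2 t • e - lam1 t • f) = 0 := by
              rw [lam2sub, lam2sub, lam2smul, lam2smul, hl2e, hl2f]; ring
            have h1 : α X₁ (t - lam2 t • e - lam1 t • f) = 0 := by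
              rw [F₁ _ ht₀V, hl1t0, zero_smul]
            have h2 : α X₂ (t - lam2 t • e - lam1 t • f) = 0 := by
              rw [F₂ _ ht₀V, hl2t0, zero_smul]
            refine ⟨lam2 t, lam1 t, t - lam2 t • e - lam1 t • f, ht₀V, by module, ?_⟩
            intro Y hY
            apply orth2 hW2 (α X₁ u₁) (α X₂ u₂) hgram
            · rw [flat Y hY X₁ hX₁ _ ht₀V u₁ hu₁, h1, inner_zero_right]
            · rw [flat Y hY X₂ hX₂ _ ht₀V u₂ hu₂, h2, inner_zero_right]
    obtain ⟨u, hu, v, hv, h0, hdec⟩ := frame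
    have nullb : ∀ x₀, x₀ ∈ V → (∀ Y ∈ H, α Y x₀ = 0) → ∀ p ∈ V, α x₀ p = 0 := by
      intro x₀ hx₀ hn p hp
      rw [hαsymm]
      exact deltaNull x₀ hx₀ hn p hp
    intro s hs t ht w hw z hz
    obtain ⟨a1, b1, s0, hs0V, hsdec, hs0n⟩ := hdec s hs
    obtain ⟨a2, b2, t0, ht0V, htdec, ht0n⟩ := hdec t ht
    obtain ⟨a3, b3, w0, hw0V, hwdec, hw0n⟩ := hdec w hw
    obtain ⟨a4, b4, z0, hz0V, hzdec, hz0n⟩ := hdec z hz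
    have e14 := alpha_expand α u v s z s0 z0 a1 b1 a4 b4 (hαsymm v u) hsdec hzdec
      (nullb s0 hs0V hs0n u hu) (nullb s0 hs0V hs0n v hv)
      (by rw [hαsymm]; exact nullb z0 hz0V hz0n u hu)
      (by rw [hαsymm]; exact nullb z0 hz0V hz0n v hv)
      (nullb s0 hs0V hs0n z0 hz0V)
    have e23 := alpha_expand α u v t w t0 w0 a2 b2 a3 b3 (hαsymm v u) htdec hwdec
      (nullb t0 ht0V ht0n u hu) (nullb t0 ht0V ht0n v hv)
      (by rw [hαsymm]; exact nullb w0 hw0V hw0n u hu)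
      (by rw [hαsymm]; exact nullb w0 hw0V hw0n v hv)
      (nullb t0 ht0V ht0n w0 hw0V)
    have e13 := alpha_expand α u v s w s0 w0 a1 b1 a3 b3 (hαsymm v u) hsdec hwdec
      (nullb s0 hs0V hs0n u hu) (nullb s0 hs0V hs0n v hv)
      (by rw [hαsymm]; exact nullb w0 hw0V hw0n u hu)
      (by rw [hαsymm]; exact nullb w0 hw0V hw0n v hv)
      (nullb s0 hs0V hs0n w0 hw0V)
    have e24 := alpha_expand α u v t z t0 z0 a2 b2 a4 b4 (hαsymm v u) htdec hzdec
      (nullb t0 ht0V ht0n u hu) (nullb t0 ht0V ht0n v hv)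
      (by rw [hαsymm]; exact nullb z0 hz0V hz0n u hu)
      (by rw [hαsymm]; exact nullb z0 hz0V hz0n v hv)
      (nullb t0 ht0V ht0n z0 hz0V)
    rw [hGauss, e14, e23, e13, e24,
      finred (α u u) (α u v) (α v v) h0 a1 b1 a2 b2 a3 b3 a4 b4]
    ring
  -- ### vanishing on four horizontal vectors
  have P3 : ∀ s ∈ H, ∀ t ∈ H, ∀ w ∈ H, ∀ z ∈ H, C s t w z = 0 := by
    have frame : ∃ u ∈ H, ∃ v ∈ H,
        (⟪α u u, α v v⟫ : ℝ) = ⟪α u v, α u v⟫ ∧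
        ∀ t ∈ H, ∃ a b : ℝ, ∃ t₀, t₀ ∈ H ∧ t = a • u + b • v + t₀ ∧
          ∀ w ∈ V, α t₀ w = 0 := by
      by_cases hA : ∃ v, v ∈ V ∧ ∃ X, X ∈ H ∧ ∃ Y, Y ∈ H ∧
          ⟪α X v, α X v⟫ * ⟪α Y v, α Y v⟫ - ⟪α X v, α Y v⟫ * ⟪α X v, α Y v⟫ ≠ 0
      · obtain ⟨v, hv, X, hX, Y, hY, hgram⟩ := hA
        refine ⟨X, hX, Y, hY, ?_, ?_⟩
        · apply keyIdentity hW2 (α X v) (α Y v) (α X X) (α X Y) (α Y Y) (α v v) hgram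
          · have h := M2 X hX Y hY X hX v hv
            rw [hαsymm Y X, real_inner_comm (α X Y) (α X v)] at h
            exact h
          · have h := M2 X hX Y hY Y hY v hv
            rw [real_inner_comm (α Y Y) (α X v)] at h
            exact h
          · have h := hC1 X hX v hv v hv X hX
            rw [hGauss, hphi X hX X hX, mul_zero, hαsymm v X] at h
            rw [real_inner_comm (α X X) (α v v)]
            linarith
          · have h := hC1 X hX v hv v hv Y hY
            rw [hGauss, hphi X hX Y hY, mul_zero, hαsymm v Y] at h
            rw [real_inner_comm (α X Y) (α v v)]
            linarith
          · have h := hC1 Y hY v hv v hv Y hY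
            rw [hGauss, hphi Y hY Y hY, mul_zero, hαsymm v Y] at h
            rw [real_inner_comm (α Y Y) (α v v)]
            linarith
        · intro t ht
          obtain ⟨a, b, hab⟩ := span2 hW2 (α X v) (α Y v) hgram (α t v)
          have ht₀H : t - a • X - b • Y ∈ H :=
            H.sub_mem (H.sub_mem ht (H.smul_mem a hX)) (H.smul_mem b hY)
          have ht0v : α (t - a • X - b • Y) v = 0 := by
            have hexp : α (t - a • X - b • Y) v = α t v - a • α X v - b • α Y v := by
              simp [map_sub, map_smul, LinearMap.sub_apply, LinearMap.smul_apply]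
            rw [hexp, hab]; module
          refine ⟨a, b, t - a • X - b • Y, ht₀H, by module, ?_⟩
          intro w hw
          apply orth2 hW2 (α X v) (α Y v) hgram
          · rw [flat _ ht₀H X hX w hw v hv, ht0v, inner_zero_left]
          · rw [flat _ ht₀H Y hY w hw v hv, ht0v, inner_zero_left]
      · push_neg at hA
        obtain ⟨X₁, hX₁, u₁, hu₁, X₂, hX₂, u₂, hu₂, hgram⟩ := EX
        have hξ₁ne : α X₁ u₁ ≠ 0 := by intro h0; rw [h0] at hgram; simp at hgram
        have hξ₂ne : α X₂ u₂ ≠ 0 := by intro h0; rw [h0] at hgram; simp at hgram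
        have hi₁ : (⟪α X₁ u₁, α X₁ u₁⟫ : ℝ) ≠ 0 := fun hq => hξ₁ne (inner_self_eq_zero.mp hq)
        have hi₂ : (⟪α X₂ u₂, α X₂ u₂⟫ : ℝ) ≠ 0 := fun hq => hξ₂ne (inner_self_eq_zero.mp hq)
        set mu1 : E → ℝ := fun t => ⟪α X₁ u₁, α t u₁⟫ / ⟪α X₁ u₁, α X₁ u₁⟫ with hmu1
        set mu2 : E → ℝ := fun t => ⟪α X₂ u₂, α t u₂⟫ / ⟪α X₂ u₂, α X₂ u₂⟫ with hmu2
        have F₁ : ∀ t ∈ H, α t u₁ = mu1 t • α X₁ u₁ := by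
          intro t ht
          exact CSE (α X₁ u₁) (α t u₁) hξ₁ne (hA u₁ hu₁ X₁ hX₁ t ht)
        have F₂ : ∀ t ∈ H, α t u₂ = mu2 t • α X₂ u₂ := by
          intro t ht
          exact CSE (α X₂ u₂) (α t u₂) hξ₂ne (hA u₂ hu₂ X₂ hX₂ t ht)
        have hm1X1 : mu1 X₁ = 1 := div_self hi₁
        have hm2X2 : mu2 X₂ = 1 := div_self hi₂
        have mu1sub : ∀ x y : E, mu1 (x - y) = mu1 x - mu1 y := by
          intro x y; simp only [hmu1]
          rw [map_sub, LinearMap.sub_apply, inner_sub_right]; ring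
        have mu1smul : ∀ (c : ℝ) (x : E), mu1 (c • x) = c * mu1 x := by
          intro c x; simp only [hmu1]
          rw [map_smul, LinearMap.smul_apply, real_inner_smul_right]; ring
        have mu2sub : ∀ x y : E, mu2 (x - y) = mu2 x - mu2 y := by
          intro x y; simp only [hmu2]
          rw [map_sub, LinearMap.sub_apply, inner_sub_right]; ring
        have mu2smul : ∀ (c : ℝ) (x : E), mu2 (c • x) = c * mu2 x := by
          intro c x; simp only [hmu2]
          rw [map_smul, LinearMap.smul_apply, real_inner_smul_right]; ring
        by_cases hdep1 : ∀ t ∈ H, mu1 t = 0 → mu2 t = 0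
        · refine ⟨X₁, hX₁, X₁, hX₁, rfl, ?_⟩
          intro t ht
          have ht₀H : t - mu1 t • X₁ ∈ H := H.sub_mem ht (H.smul_mem _ hX₁)
          have hm1t0 : mu1 (t - mu1 t • X₁) = 0 := by
            rw [mu1sub, mu1smul, hm1X1]; ring
          have h1 : α (t - mu1 t • X₁) u₁ = 0 := by
            rw [F₁ _ ht₀H, hm1t0, zero_smul]
          have h2 : α (t - mu1 t • X₁) u₂ = 0 := by
            rw [F₂ _ ht₀H, hdep1 _ ht₀H hm1t0, zero_smul]
          refine ⟨mu1 t, 0, t - mu1 t • X₁, ht₀H, by module, ?_⟩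
          intro w hw
          apply orth2 hW2 (α X₁ u₁) (α X₂ u₂) hgram
          · rw [flat _ ht₀H X₁ hX₁ w hw u₁ hu₁, h1, inner_zero_left]
          · rw [flat _ ht₀H X₂ hX₂ w hw u₂ hu₂, h2, inner_zero_left]
        · by_cases hdep2 : ∀ t ∈ H, mu2 t = 0 → mu1 t = 0
          · refine ⟨X₂, hX₂, X₂, hX₂, rfl, ?_⟩
            intro t ht
            have ht₀H : t - mu2 t • X₂ ∈ H := H.sub_mem ht (H.smul_mem _ hX₂)
            have hm2t0 : mu2 (t - mu2 t • X₂) = 0 := by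
              rw [mu2sub, mu2smul, hm2X2]; ring
            have h2 : α (t - mu2 t • X₂) u₂ = 0 := by
              rw [F₂ _ ht₀H, hm2t0, zero_smul]
            have h1 : α (t - mu2 t • X₂) u₁ = 0 := by
              rw [F₁ _ ht₀H, hdep2 _ ht₀H hm2t0, zero_smul]
            refine ⟨mu2 t, 0, t - mu2 t • X₂, ht₀H, by module, ?_⟩
            intro w hw
            apply orth2 hW2 (α X₁ u₁) (α X₂ u₂) hgram
            · rw [flat _ ht₀H X₁ hX₁ w hw u₁ hu₁, h1, inner_zero_left]
            · rw [flat _ ht₀H X₂ hX₂ w hw u₂ hu₂, h2, inner_zero_left]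
          · push_neg at hdep1 hdep2
            obtain ⟨e₀, he₀H, hm1e₀, hm2e₀⟩ := hdep1
            obtain ⟨f₀, hf₀H, hm2f₀, hm1f₀⟩ := hdep2
            obtain ⟨e, heH, hm1e, hm2e⟩ : ∃ e, e ∈ H ∧ mu1 e = 0 ∧ mu2 e = 1 :=
              ⟨(mu2 e₀)⁻¹ • e₀, H.smul_mem _ he₀H,
                by rw [mu1smul, hm1e₀, mul_zero],
                by rw [mu2smul]; exact inv_mul_cancel₀ hm2e₀⟩
            obtain ⟨f, hfH, hm1f, hm2f⟩ : ∃ f, f ∈ H ∧ mu1 f = 1 ∧ mu2 f = 0 :=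
              ⟨(mu1 f₀)⁻¹ • f₀, H.smul_mem _ hf₀H,
                by rw [mu1smul]; exact inv_mul_cancel₀ hm1f₀,
                by rw [mu2smul, hm2f₀, mul_zero]⟩
            have heu₁ : α e u₁ = 0 := by rw [F₁ e heH, hm1e, zero_smul]
            have heu₂ : α e u₂ = α X₂ u₂ := by rw [F₂ e heH, hm2e, one_smul]
            have hfu₁ : α f u₁ = α X₁ u₁ := by rw [F₁ f hfH, hm1f, one_smul]
            have hfu₂ : α f u₂ = 0 := by rw [F₂ f hfH, hm2f, zero_smul]
            have horthξ : (⟪α X₁ u₁, α X₂ u₂⟫ : ℝ) = 0 := by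
              have h := flat f hfH e heH u₁ hu₁ u₂ hu₂
              rw [hfu₁, heu₂, hfu₂, inner_zero_left] at h
              exact h
            have hPξ₁ : (⟪α e e, α X₁ u₁⟫ : ℝ) = 0 := by
              have h := M2 e heH f hfH e heH u₁ hu₁
              rw [hfu₁, heu₁, inner_zero_left] at h
              exact h
            have hQξ₁ : (⟪α e f, α X₁ u₁⟫ : ℝ) = 0 := by
              have h := M2 e heH f hfH f hfH u₁ hu₁
              rw [hfu₁, heu₁, inner_zero_left] at h
              exact h
            have hQξ₂ : (⟪α e f, α X₂ u₂⟫ : ℝ) = 0 := by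
              have h := M2 f hfH e heH e heH u₂ hu₂
              rw [heu₂, hfu₂, inner_zero_left, hαsymm f e] at h
              exact h
            have hRξ₂ : (⟪α f f, α X₂ u₂⟫ : ℝ) = 0 := by
              have h := M2 f hfH e heH f hfH u₂ hu₂
              rw [heu₂, hfu₂, inner_zero_left] at h
              exact h
            have hQ0 : α e f = 0 := orth2 hW2 _ _ hgram _ hQξ₁ hQξ₂
            have h0 : (⟪α e e, α f f⟫ : ℝ) = ⟪α e f, α e f⟫ := by
              obtain ⟨aa, bb, hEE⟩ := span2 hW2 (α X₁ u₁) (α X₂ u₂) hgram (α e e)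
              obtain ⟨cc, dd, hFF⟩ := span2 hW2 (α X₁ u₁) (α X₂ u₂) hgram (α f f)
              have haa : aa * ⟪α X₁ u₁, α X₁ u₁⟫ = 0 := by
                have h := hPξ₁
                rw [hEE] at h
                simp only [inner_add_left, real_inner_smul_left] at h
                rw [real_inner_comm (α X₁ u₁) (α X₂ u₂), horthξ, mul_zero, add_zero] at h
                exact h
              have haa0 : aa = 0 := (mul_eq_zero.mp haa).resolve_right hi₁
              have hdd : dd * ⟪α X₂ u₂, α X₂ u₂⟫ = 0 := by
                have h := hRξ₂
                rw [hFF] at h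
                simp only [inner_add_left, real_inner_smul_left] at h
                rw [horthξ, mul_zero, zero_add] at h
                exact h
              have hdd0 : dd = 0 := (mul_eq_zero.mp hdd).resolve_right hi₂
              rw [hEE, hFF, haa0, hdd0, hQ0]
              simp only [zero_smul, zero_add, add_zero, real_inner_smul_left,
                real_inner_smul_right, inner_zero_left]
              rw [real_inner_comm (α X₁ u₁) (α X₂ u₂), horthξ]
              ring
            refine ⟨e, heH, f, hfH, h0, ?_⟩
            intro t ht
            have ht₀H : t - mu2 t • e - mu1 t • f ∈ H :=
              H.sub_mem (H.sub_mem ht (H.smul_mem _ heH)) (H.smul_mem _ hfH)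
            have hm1t0 : mu1 (t - mu2 t • e - mu1 t • f) = 0 := by
              rw [mu1sub, mu1sub, mu1smul, mu1smul, hm1e, hm1f]; ring
            have hm2t0 : mu2 (t - mu2 t • e - mu1 t • f) = 0 := by
              rw [mu2sub, mu2sub, mu2smul, mu2smul, hm2e, hm2f]; ring
            have h1 : α (t - mu2 t • e - mu1 t • f) u₁ = 0 := by
              rw [F₁ _ ht₀H, hm1t0, zero_smul]
            have h2 : α (t - mu2 t • e - mu1 t • f) u₂ = 0 := by
              rw [F₂ _ ht₀H, hm2t0, zero_smul]
            refine ⟨mu2 t, mu1 t, t - mu2 t • e - mu1 t • f, ht₀H, by module, ?_⟩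
            intro w hw
            apply orth2 hW2 (α X₁ u₁) (α X₂ u₂) hgram
            · rw [flat _ ht₀H X₁ hX₁ w hw u₁ hu₁, h1, inner_zero_left]
            · rw [flat _ ht₀H X₂ hX₂ w hw u₂ hu₂, h2, inner_zero_left]
    obtain ⟨u, hu, v, hv, h0, hdec⟩ := frame
    intro s hs t ht w hw z hz
    obtain ⟨a1, b1, s0, hs0H, hsdec, hs0n⟩ := hdec s hs
    obtain ⟨a2, b2, t0, ht0H, htdec, ht0n⟩ := hdec t ht
    obtain ⟨a3, b3, w0, hw0H, hwdec, hw0n⟩ := hdec w hw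
    obtain ⟨a4, b4, z0, hz0H, hzdec, hz0n⟩ := hdec z hz
    have e14 := alpha_expand α u v s z s0 z0 a1 b1 a4 b4 (hαsymm v u) hsdec hzdec
      (gammaNull s0 hs0H hs0n u hu) (gammaNull s0 hs0H hs0n v hv)
      (by rw [hαsymm]; exact gammaNull z0 hz0H hz0n u hu)
      (by rw [hαsymm]; exact gammaNull z0 hz0H hz0n v hv)
      (gammaNull s0 hs0H hs0n z0 hz0H)
    have e23 := alpha_expand α u v t w t0 w0 a2 b2 a3 b3 (hαsymm v u) htdec hwdec
      (gammaNull t0 ht0H ht0n u hu) (gammaNull t0 ht0H ht0n v hv)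
      (by rw [hαsymm]; exact gammaNull w0 hw0H hw0n u hu)
      (by rw [hαsymm]; exact gammaNull w0 hw0H hw0n v hv)
      (gammaNull t0 ht0H ht0n w0 hw0H)
    have e13 := alpha_expand α u v s w s0 w0 a1 b1 a3 b3 (hαsymm v u) hsdec hwdec
      (gammaNull s0 hs0H hs0n u hu) (gammaNull s0 hs0H hs0n v hv)
      (by rw [hαsymm]; exact gammaNull w0 hw0H hw0n u hu)
      (by rw [hαsymm]; exact gammaNull w0 hw0H hw0n v hv)
      (gammaNull s0 hs0H hs0n w0 hw0H)
    have e24 := alpha_expand α u v t z t0 z0 a2 b2 a4 b4 (hαsymm v u) htdec hzdec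
      (gammaNull t0 ht0H ht0n u hu) (gammaNull t0 ht0H ht0n v hv)
      (by rw [hαsymm]; exact gammaNull z0 hz0H hz0n u hu)
      (by rw [hαsymm]; exact gammaNull z0 hz0H hz0n v hv)
      (gammaNull t0 ht0H ht0n z0 hz0H)
    rw [hGauss, e14, e23, e13, e24,
      finred (α u u) (α u v) (α v v) h0 a1 b1 a2 b2 a3 b3 a4 b4]
    ring
  -- ### symmetries of C
  have Csw12 : ∀ a b u v : E, C a b u v = - C b a u v := by
    intro a b u v
    rw [hGauss, hGauss, real_inner_comm (α a u) (α b v), real_inner_comm (α a v) (α b u)]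
    ring
  have Csw34 : ∀ a b u v : E, C a b u v = - C a b v u := by
    intro a b u v; rw [hGauss, hGauss]; ring
  have Cpair : ∀ a b u v : E, C a b u v = C u v a b := by
    intro a b u v
    rw [hGauss, hGauss, hαsymm u b, hαsymm v a, hαsymm u a, hαsymm v b,
      real_inner_comm (α a v) (α b u)]
  -- ### mixed patterns
  have PHHHV : ∀ X ∈ H, ∀ Y ∈ H, ∀ Z ∈ H, ∀ v ∈ V, C X Y Z v = 0 := by
    intro X hX Y hY Z hZ v hv
    rw [Csw34, hC2 X hX Y hY v hv Z hZ, neg_zero]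
  have PHVHH : ∀ X ∈ H, ∀ v ∈ V, ∀ Y ∈ H, ∀ Z ∈ H, C X v Y Z = 0 := by
    intro X hX v hv Y hY Z hZ
    rw [Cpair]; exact PHHHV Y hY Z hZ X hX v hv
  have PHVVH : ∀ X ∈ H, ∀ v ∈ V, ∀ w ∈ V, ∀ Y ∈ H, C X v w Y = 0 := by
    intro X hX v hv w hw Y hY
    rw [hC1 X hX v hv w hw Y hY, hphi X hX Y hY, mul_zero]
  have PHVHV : ∀ X ∈ H, ∀ v ∈ V, ∀ Y ∈ H, ∀ w ∈ V, C X v Y w = 0 := by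
    intro X hX v hv Y hY w hw
    rw [Csw34, PHVVH X hX v hv w hw Y hY, neg_zero]
  have PVVHV : ∀ u ∈ V, ∀ v ∈ V, ∀ X ∈ H, ∀ w ∈ V, C u v X w = 0 := by
    intro u hu v hv X hX w hw
    rw [Cpair]; exact hC4 X hX w hw u hu v hv
  -- ### assembling everything
  have hall : ∀ x1, (x1 ∈ H ∨ x1 ∈ V) → ∀ x2, (x2 ∈ H ∨ x2 ∈ V) →
      ∀ x3, (x3 ∈ H ∨ x3 ∈ V) → ∀ x4, (x4 ∈ H ∨ x4 ∈ V) → C x1 x2 x3 x4 = 0 := by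
    intro x1 h1 x2 h2 x3 h3 x4 h4
    rcases h1 with h1 | h1 <;> rcases h2 with h2 | h2 <;>
      rcases h3 with h3 | h3 <;> rcases h4 with h4 | h4
    · exact P3 x1 h1 x2 h2 x3 h3 x4 h4
    · exact PHHHV x1 h1 x2 h2 x3 h3 x4 h4
    · exact hC2 x1 h1 x2 h2 x3 h3 x4 h4
    · exact hC3 x1 h1 x2 h2 x3 h3 x4 h4
    · exact PHVHH x1 h1 x2 h2 x3 h3 x4 h4
    · exact PHVHV x1 h1 x2 h2 x3 h3 x4 h4
    · exact PHVVH x1 h1 x2 h2 x3 h3 x4 h4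
    · exact hC4 x1 h1 x2 h2 x3 h3 x4 h4
    · rw [Csw12, PHVHH x2 h2 x1 h1 x3 h3 x4 h4, neg_zero]
    · rw [Csw12, PHVHV x2 h2 x1 h1 x3 h3 x4 h4, neg_zero]
    · rw [Csw12, PHVVH x2 h2 x1 h1 x3 h3 x4 h4, neg_zero]
    · rw [Csw12, hC4 x2 h2 x1 h1 x3 h3 x4 h4, neg_zero]
    · rw [Cpair]; exact hC3 x3 h3 x4 h4 x1 h1 x2 h2
    · exact PVVHV x1 h1 x2 h2 x3 h3 x4 h4
    · rw [Csw34, PVVHV x1 h1 x2 h2 x4 h4 x3 h3, neg_zero]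
    · exact P2 x1 h1 x2 h2 x3 h3 x4 h4
  have Cadd1 : ∀ x y b u v : E, C (x + y) b u v = C x b u v + C y b u v := by
    intro x y b u v
    simp only [hGauss, map_add, LinearMap.add_apply, inner_add_left, inner_add_right]; ring
  have Cadd2 : ∀ a x y u v : E, C a (x + y) u v = C a x u v + C a y u v := by
    intro a x y u v
    simp only [hGauss, map_add, LinearMap.add_apply, inner_add_left, inner_add_right]; ring
  have Cadd3 : ∀ a b x y v : E, C a b (x + y) v = C a b x v + C a b y v := by
    intro a b x y v
    simp only [hGauss, map_add, LinearMap.add_apply, inner_add_left, inner_add_right]; ring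
  have Cadd4 : ∀ a b u x y : E, C a b u (x + y) = C a b u x + C a b u y := by
    intro a b u x y
    simp only [hGauss, map_add, LinearMap.add_apply, inner_add_left, inner_add_right]; ring
  intro a b u v
  obtain ⟨a1, ha1, a2, ha2, ha⟩ := Submodule.mem_sup.mp
    (show a ∈ H ⊔ V by rw [hsup]; exact Submodule.mem_top)
  obtain ⟨b1, hb1, b2, hb2, hb⟩ := Submodule.mem_sup.mp
    (show b ∈ H ⊔ V by rw [hsup]; exact Submodule.mem_top)
  obtain ⟨u1, hu1, u2, hu2, hu⟩ := Submodule.mem_sup.mp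
    (show u ∈ H ⊔ V by rw [hsup]; exact Submodule.mem_top)
  obtain ⟨v1, hv1, v2, hv2, hv⟩ := Submodule.mem_sup.mp
    (show v ∈ H ⊔ V by rw [hsup]; exact Submodule.mem_top)
  rw [← ha, ← hb, ← hu, ← hv]
  simp only [Cadd1, Cadd2, Cadd3, Cadd4]
  rw [hall a1 (Or.inl ha1) b1 (Or.inl hb1) u1 (Or.inl hu1) v1 (Or.inl hv1),
    hall a1 (Or.inl ha1) b1 (Or.inl hb1) u1 (Or.inl hu1) v2 (Or.inr hv2),
    hall a1 (Or.inl ha1) b1 (Or.inl hb1) u2 (Or.inr hu2) v1 (Or.inl hv1),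
    hall a1 (Or.inl ha1) b1 (Or.inl hb1) u2 (Or.inr hu2) v2 (Or.inr hv2),
    hall a1 (Or.inl ha1) b2 (Or.inr hb2) u1 (Or.inl hu1) v1 (Or.inl hv1),
    hall a1 (Or.inl ha1) b2 (Or.inr hb2) u1 (Or.inl hu1) v2 (Or.inr hv2),
    hall a1 (Or.inl ha1) b2 (Or.inr hb2) u2 (Or.inr hu2) v1 (Or.inl hv1),
    hall a1 (Or.inl ha1) b2 (Or.inr hb2) u2 (Or.inr hu2) v2 (Or.inr hv2),
    hall a2 (Or.inr ha2) b1 (Or.inl hb1) u1 (Or.inl hu1) v1 (Or.inl hv1),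
    hall a2 (Or.inr ha2) b1 (Or.inl hb1) u1 (Or.inl hu1) v2 (Or.inr hv2),
    hall a2 (Or.inr ha2) b1 (Or.inl hb1) u2 (Or.inr hu2) v1 (Or.inl hv1),
    hall a2 (Or.inr ha2) b1 (Or.inl hb1) u2 (Or.inr hu2) v2 (Or.inr hv2),
    hall a2 (Or.inr ha2) b2 (Or.inr hb2) u1 (Or.inl hu1) v1 (Or.inl hv1),
    hall a2 (Or.inr ha2) b2 (Or.inr hb2) u1 (Or.inl hu1) v2 (Or.inr hv2),
    hall a2 (Or.inr ha2) b2 (Or.inr hb2) u2 (Or.inr hu2) v1 (Or.inl hv1),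
    hall a2 (Or.inr ha2) b2 (Or.inr hb2) u2 (Or.inr hu2) v2 (Or.inr hv2)]
  ring
end

section
/- Let f : L × M → Q_c^{p+n+2} be an isometric immersion of a Riemannian product (ρ ≡ 1) which is of type C at a point z (i.e. dim α(H_z,V_z) ≥ 2). If p ≥ 3 or n ≥ 3, then c = 0. -/
/-!
Type C yields `X₁, X₂ ∈ H` and `v₁, v₂ ∈ V` such that `α X₁ v₁, α X₂ v₂` is a basis of the
normal plane `W`. As `dim V ≥ 3`, either some `α X` is onto `W` on `V` and has a kernel vector
there, or `α X₁` and `α X₂` have rank at most one on `V` and a common kernel vector. Either way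
we get `X ≠ 0` and `v ≠ 0` with `α X v = 0`, and the Gauss identity
`⟪α X w, α v v⟫ = ⟪α X v, α v w⟫ = 0` makes `α v v` orthogonal to a spanning set, so `α v v = 0`.
The Gauss equation for the mixed plane spanned by `X` and `v` then reads `0 = -c ‖v‖² ‖X‖²`.
If instead `dim H ≥ 3`, the roles of `H` and `V` are exchanged.
-/

open scoped RealInnerProductSpace

open Module Submodule LinearMap

theorem exists_linearIndependent_pair_of_two_le_finrank_span {K W : Type*} [DivisionRing K]
    [AddCommGroup W] [Module K W] {s : Set W} (hs : 2 ≤ finrank K (span K s)) :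
    ∃ x ∈ s, ∃ y ∈ s, LinearIndependent K ![x, y] := by
  obtain ⟨x, hxs, hx⟩ : ∃ x ∈ s, x ≠ 0 := by
    by_contra! h
    rw [span_eq_bot.mpr h, finrank_bot] at hs
    omega
  obtain ⟨y, hys, hy⟩ : ∃ y ∈ s, y ∉ K ∙ x := by
    by_contra! h
    have := finrank_mono (span_le.mpr h)
    rw [finrank_span_singleton hx] at this
    omega
  refine ⟨x, hxs, y, hys, (LinearIndependent.pair_iff' hx).mpr fun a hay => hy ?_⟩
  exact hay ▸ smul_mem _ a (mem_span_singleton_self x)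

theorem eq_zero_of_inner_eq_zero_of_linearIndependent_pair {W : Type*} [NormedAddCommGroup W]
    [InnerProductSpace ℝ W] [FiniteDimensional ℝ W] (hW : finrank ℝ W = 2) {w₁ w₂ x : W}
    (hli : LinearIndependent ℝ ![w₁, w₂]) (h₁ : ⟪w₁, x⟫ = 0) (h₂ : ⟪w₂, x⟫ = 0) : x = 0 := by
  let b := basisOfLinearIndependentOfCardEqFinrank hli (by rw [hW, Fintype.card_fin])
  refine InnerProductSpace.ext_inner_left_basis b fun i => ?_
  fin_cases i <;> simp [b, h₁, h₂]

theorem LinearMap.ker_inf_ker_ne_bot {K V W : Type*} [DivisionRing K] [AddCommGroup V]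
    [Module K V] [AddCommGroup W] [Module K W] [FiniteDimensional K V] (f g : V →ₗ[K] W)
    (h : finrank K (range f) + finrank K (range g) < finrank K V) : ker f ⊓ ker g ≠ ⊥ := by
  intro hbot
  have hinf := finrank_sup_add_finrank_inf_eq (ker f) (ker g)
  rw [hbot, finrank_bot] at hinf
  have := (ker f ⊔ ker g).finrank_le
  have := f.finrank_range_add_finrank_ker
  have := g.finrank_range_add_finrank_ker
  omega

section SecondFundamentalForm

variable {E W : Type*} [NormedAddCommGroup E] [InnerProductSpace ℝ E]
  [NormedAddCommGroup W] [InnerProductSpace ℝ W] [FiniteDimensional ℝ W]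
  {H V : Submodule ℝ E} {α : E →ₗ[ℝ] E →ₗ[ℝ] W}

theorem exists_apply_eq_zero_of_typeC (hW : finrank ℝ W = 2) (hV : 3 ≤ finrank ℝ V)
    (hmixed : ∀ X ∈ H, ∀ u ∈ V, ∀ v ∈ V, ∀ w ∈ V, ⟪α X w, α u v⟫ - ⟪α X v, α u w⟫ = 0)
    (htypeC : 2 ≤ finrank ℝ (span ℝ (Set.image2 (fun X v => α X v) H V))) :
    ∃ X ∈ H, X ≠ 0 ∧ ∃ v ∈ V, v ≠ 0 ∧ α X v = 0 ∧ α v v = 0 := by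
  have : FiniteDimensional ℝ V := .of_finrank_pos (by omega)
  obtain ⟨_, ⟨X₁, hX₁, v₁, hv₁, rfl⟩, _, ⟨X₂, hX₂, v₂, hv₂, rfl⟩, hli⟩ :=
    exists_linearIndependent_pair_of_two_le_finrank_span htypeC
  have horth : ∀ X ∈ H, ∀ v₀ ∈ V, α X v₀ = 0 → ∀ w ∈ V, ⟪α X w, α v₀ v₀⟫ = 0 := by
    intro X hX v₀ hv₀ hXv₀ w hw
    simpa [hXv₀] using hmixed X hX v₀ hv₀ v₀ hv₀ w hw
  by_cases hsurj : ∃ X ∈ H, Function.Surjective ((α X).domRestrict V)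
  · obtain ⟨X, hX, hsurj⟩ := hsurj
    obtain ⟨v₀, hv₀, hv₀0⟩ := (Submodule.ne_bot_iff _).mp
      (ker_ne_bot_of_finrank_lt (f := (α X).domRestrict V) (by omega))
    have hXv₀ : α X v₀ = 0 := hv₀
    refine ⟨X, hX, ?_, v₀, v₀.2, by simpa using hv₀0, hXv₀, ?_⟩
    · rintro rfl
      obtain ⟨w, hw⟩ := hsurj (α X₁ v₁)
      exact hli.ne_zero 0 (by simpa using hw.symm)
    · obtain ⟨w, hw⟩ := hsurj (α v₀ v₀)
      exact inner_self_eq_zero.mp (hw ▸ horth X hX v₀ v₀.2 hXv₀ w w.2)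
  · push Not at hsurj
    have hrank : ∀ X ∈ H, finrank ℝ (range ((α X).domRestrict V)) ≤ 1 := fun X hX => by
      have := finrank_lt (mt range_eq_top.mp (hsurj X hX))
      omega
    obtain ⟨v₀, hv₀, hv₀0⟩ := (Submodule.ne_bot_iff _).mp
      (ker_inf_ker_ne_bot ((α X₁).domRestrict V) ((α X₂).domRestrict V)
        (by linarith [hrank X₁ hX₁, hrank X₂ hX₂]))
    have hX₁v₀ : α X₁ v₀ = 0 := (mem_inf.mp hv₀).1
    have hX₂v₀ : α X₂ v₀ = 0 := (mem_inf.mp hv₀).2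
    refine ⟨X₁, hX₁, ?_, v₀, v₀.2, by simpa using hv₀0, hX₁v₀, ?_⟩
    · rintro rfl
      exact hli.ne_zero 0 (by simp)
    · exact eq_zero_of_inner_eq_zero_of_linearIndependent_pair hW hli
        (horth X₁ hX₁ v₀ v₀.2 hX₁v₀ v₁ hv₁) (horth X₂ hX₂ v₀ v₀.2 hX₂v₀ v₂ hv₂)

theorem curvature_eq_zero_of_typeC {c : ℝ} (hW : finrank ℝ W = 2) (hV : 3 ≤ finrank ℝ V)
    (hαsymm : ∀ u v : E, α u v = α v u)
    (hmixed : ∀ X ∈ H, ∀ u ∈ V, ∀ v ∈ V, ∀ w ∈ V, ⟪α X w, α u v⟫ - ⟪α X v, α u w⟫ = 0)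
    (hcurv : ∀ X ∈ H, ∀ v ∈ V, ⟪α X X, α v v⟫ - ⟪α X v, α v X⟫ = -c * ⟪v, v⟫ * ⟪X, X⟫)
    (htypeC : 2 ≤ finrank ℝ (span ℝ (Set.image2 (fun X v => α X v) H V))) : c = 0 := by
  obtain ⟨X, hX, hX0, v, hv, hv0, hXv, hvv⟩ := exists_apply_eq_zero_of_typeC hW hV hmixed htypeC
  have h := hcurv X hX v hv
  rw [hvv, hαsymm v X, hXv] at h
  simpa [hX0, hv0] using h

end SecondFundamentalForm

theorem stmt_13_general {E W : Type*}
    [NormedAddCommGroup E] [InnerProductSpace ℝ E]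
    [NormedAddCommGroup W] [InnerProductSpace ℝ W] [FiniteDimensional ℝ W]
    (H V : Submodule ℝ E)
    (hdim : 3 ≤ Module.finrank ℝ H ∨ 3 ≤ Module.finrank ℝ V)
    (hW2 : Module.finrank ℝ W = 2)
    (α : E →ₗ[ℝ] E →ₗ[ℝ] W)
    (hαsymm : ∀ u v : E, α u v = α v u)
    (c : ℝ) (C : E → E → E → E → ℝ)
    (hGauss : ∀ a b u v : E,
      C a b u v = ⟪α a v, α b u⟫ - ⟪α a u, α b v⟫)
    (hC1 : ∀ X ∈ H, ∀ v ∈ V, ∀ w ∈ V, ∀ Y ∈ H,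
      C X v w Y = -c * ⟪v, w⟫ * ⟪X, Y⟫)
    (hC1' : ∀ v ∈ V, ∀ X ∈ H, ∀ Y ∈ H, ∀ w ∈ V,
      C v X Y w = -c * ⟪X, Y⟫ * ⟪v, w⟫)
    (hC4 : ∀ X ∈ H, ∀ u ∈ V, ∀ v ∈ V, ∀ w ∈ V, C X u v w = 0)
    (hC4' : ∀ v ∈ V, ∀ X ∈ H, ∀ Y ∈ H, ∀ Z ∈ H, C v X Y Z = 0)
    (htypeC : 2 ≤ Module.finrank ℝ
      (Submodule.span ℝ {w : W | ∃ Y ∈ H, ∃ v ∈ V, α Y v = w})) :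
    c = 0 := by
  simp only [hGauss] at hC1 hC1' hC4 hC4'
  rcases hdim with hH | hV
  · have hswap : Set.image2 (fun X v => α X v) V H = Set.image2 (fun X v => α X v) H V := by
      rw [Set.image2_swap]
      simp_rw [hαsymm]
    refine curvature_eq_zero_of_typeC hW2 hH hαsymm hC4'
      (fun v hv X hX => hC1' v hv X hX X hX v hv) ?_
    rwa [hswap]
  · exact curvature_eq_zero_of_typeC hW2 hV hαsymm hC4
      (fun X hX v hv => hC1 X hX v hv v hv X hX) htypeC

/-- Corollary 5.2(i) (pointwise): for an isometric immersion of a Riemannian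
product in codimension two which is of type C at a point (`dim α(H,V) ≥ 2`),
if `dim H ≥ 3` or `dim V ≥ 3`, then `c = 0`.  The curvature-like tensor `C`
is given by the Gauss equation, and for a Riemannian product it satisfies
`C(X,V,W,Y) = −c⟨V,W⟩⟨X,Y⟩` as well as the vanishing identities (2.7)–(2.9)
with the roles of the factors interchangeable. -/
theorem stmt_13 {E W : Type*}
    [NormedAddCommGroup E] [InnerProductSpace ℝ E]
    [NormedAddCommGroup W] [InnerProductSpace ℝ W] [FiniteDimensional ℝ W]
    (H V : Submodule ℝ E)
    (horth : ∀ x ∈ H, ∀ v ∈ V, ⟪x, v⟫ = 0)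
    (hsup : H ⊔ V = ⊤)
    (hH : H ≠ ⊥) (hV : V ≠ ⊥)
    (hdim : 3 ≤ Module.finrank ℝ H ∨ 3 ≤ Module.finrank ℝ V)
    (hW2 : Module.finrank ℝ W = 2)
    (α : E →ₗ[ℝ] E →ₗ[ℝ] W)
    (hαsymm : ∀ u v : E, α u v = α v u)
    (c : ℝ) (C : E → E → E → E → ℝ)
    (hGauss : ∀ a b u v : E,
      C a b u v = ⟪α a v, α b u⟫ - ⟪α a u, α b v⟫)
    (hC1 : ∀ X ∈ H, ∀ v ∈ V, ∀ w ∈ V, ∀ Y ∈ H,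
      C X v w Y = -c * ⟪v, w⟫ * ⟪X, Y⟫)
    (hC1' : ∀ v ∈ V, ∀ X ∈ H, ∀ Y ∈ H, ∀ w ∈ V,
      C v X Y w = -c * ⟪X, Y⟫ * ⟪v, w⟫)
    (hC2 : ∀ X ∈ H, ∀ Y ∈ H, ∀ v ∈ V, ∀ Z ∈ H, C X Y v Z = 0)
    (hC2' : ∀ v ∈ V, ∀ w ∈ V, ∀ X ∈ H, ∀ u ∈ V, C v w X u = 0)
    (hC3 : ∀ X ∈ H, ∀ Y ∈ H, ∀ v ∈ V, ∀ w ∈ V, C X Y v w = 0)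
    (hC3' : ∀ v ∈ V, ∀ w ∈ V, ∀ X ∈ H, ∀ Y ∈ H, C v w X Y = 0)
    (hC4 : ∀ X ∈ H, ∀ u ∈ V, ∀ v ∈ V, ∀ w ∈ V, C X u v w = 0)
    (hC4' : ∀ v ∈ V, ∀ X ∈ H, ∀ Y ∈ H, ∀ Z ∈ H, C v X Y Z = 0)
    (htypeC : 2 ≤ Module.finrank ℝ
      (Submodule.span ℝ {w : W | ∃ Y ∈ H, ∃ v ∈ V, α Y v = w})) :
    c = 0 :=
  stmt_13_general H V hdim hW2 α hαsymm c C hGauss hC1 hC1' hC4 hC4' htypeC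
end

section
/- Let H, V be real inner product spaces with dim V ≥ 2, and suppose a symmetric bilinear map α : (H⊕V) × (H⊕V) → W into a 2-dimensional inner product space W has the type-B₂ normal form: for orthonormal {ξ, ξ̃} in W and unit vectors X₀ ∈ H, e ∈ V, A_ξ Y = ⟨Y,X₀⟩(βX₀+λe), A_ξ V = ⟨V,e⟩(λX₀+γe), A_ξ̃ Y = β̃₀⟨Y,X₀⟩X₀, A_ξ̃ V = b̃V + (γ̃₀ − b̃)⟨V,e⟩e, with λ ≠ 0, βγ − λ² ≠ 0, β̃₀ ≠ 0, b̃ = β̃₀^{-1}δ̃₀ and δ̃₀ = β̃₀γ̃₀ + βγ − λ². Then the relative nullity subspace Δ = {T : α(T,·) = 0} equals {X₀}^⊥ ∩ H if δ̃₀ ≠ 0, and equals ({X₀}^⊥ ∩ H) ⊕ ({e}^⊥ ∩ V) if δ̃₀ = 0. -/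
/-!
Since `ξ, ξ'` are linearly independent, `α(T, ·) = 0` means `A T = 0` and `A' T = 0`.
Writing `T = Y + v` with `Y ∈ H`, `v ∈ V`, the equation `A T = 0` is the linear system with
symmetric matrix `[[β, λ], [λ, γ]]` in `(⟪Y, X₀⟫, ⟪v, e⟫)`; its determinant `βγ - λ²` is
nonzero, so `⟪Y, X₀⟫ = ⟪v, e⟫ = 0`. For such `T` the normal form gives `A' T = b̃ v`, and
`b̃ = β̃₀⁻¹ δ̃₀` vanishes exactly when `δ̃₀` does.
-/

open scoped RealInnerProductSpace

theorem linearIndependent_pair_of_inner_eq_zero {F : Type*} [NormedAddCommGroup F]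
    [InnerProductSpace ℝ F] {x y : F} (hx : x ≠ 0) (hy : y ≠ 0) (hxy : ⟪x, y⟫ = 0) :
    LinearIndependent ℝ ![x, y] := by
  refine linearIndependent_of_ne_zero_of_inner_eq_zero (by simp [Fin.forall_fin_two, hx, hy]) ?_
  intro i j hij
  fin_cases i <;> fin_cases j <;> simp_all [real_inner_comm]

theorem forall_inner_smul_add_inner_smul_eq_zero_iff {E W : Type*}
    [NormedAddCommGroup E] [InnerProductSpace ℝ E] [AddCommGroup W] [Module ℝ W]
    {ξ ξ' : W} (hξ : LinearIndependent ℝ ![ξ, ξ']) (a b : E) :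
    (∀ u : E, ⟪a, u⟫ • ξ + ⟪b, u⟫ • ξ' = 0) ↔ a = 0 ∧ b = 0 := by
  refine ⟨fun h ↦ ⟨?_, ?_⟩, by rintro ⟨rfl, rfl⟩; simp⟩
  · exact inner_self_eq_zero.mp (hξ.eq_zero_of_pair (h a)).1
  · exact inner_self_eq_zero.mp (hξ.eq_zero_of_pair (h b)).2

theorem eq_zero_and_eq_zero_of_symmetric_system {β lam γ a b : ℝ} (hdet : β * γ - lam ^ 2 ≠ 0)
    (h₁ : a * β + b * lam = 0) (h₂ : a * lam + b * γ = 0) : a = 0 ∧ b = 0 := by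
  constructor
  · exact (mul_eq_zero.mp (by linear_combination γ * h₁ - lam * h₂ :
      (β * γ - lam ^ 2) * a = 0)).resolve_left hdet
  · exact (mul_eq_zero.mp (by linear_combination β * h₂ - lam * h₁ :
      (β * γ - lam ^ 2) * b = 0)).resolve_left hdet

section TypeB2

variable {E : Type*} [NormedAddCommGroup E] [InnerProductSpace ℝ E]
  {H V : Submodule ℝ E} {X₀ e Y v : E} {β lam γ βt₀ γt₀ bt : ℝ} {A A' : E →ₗ[ℝ] E}

theorem typeB2_map_add_eq_zero_iff (hX₀e : LinearIndependent ℝ ![X₀, e])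
    (hdet : β * γ - lam ^ 2 ≠ 0)
    (hAH : ∀ Y ∈ H, A Y = ⟪Y, X₀⟫ • (β • X₀ + lam • e))
    (hAV : ∀ v ∈ V, A v = ⟪v, e⟫ • (lam • X₀ + γ • e)) (hY : Y ∈ H) (hv : v ∈ V) :
    A (Y + v) = 0 ↔ ⟪Y, X₀⟫ = 0 ∧ ⟪v, e⟫ = 0 := by
  have hA : A (Y + v) =
      (⟪Y, X₀⟫ * β + ⟪v, e⟫ * lam) • X₀ + (⟪Y, X₀⟫ * lam + ⟪v, e⟫ * γ) • e := by
    rw [map_add, hAH Y hY, hAV v hv]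
    module
  refine ⟨fun h ↦ ?_, fun ⟨ha, hb⟩ ↦ by simp [hA, ha, hb]⟩
  obtain ⟨h₁, h₂⟩ := hX₀e.eq_zero_of_pair (hA ▸ h)
  exact eq_zero_and_eq_zero_of_symmetric_system hdet h₁ h₂

theorem typeB2_map_add_of_inner_eq_zero
    (hA'H : ∀ Y ∈ H, A' Y = (βt₀ * ⟪Y, X₀⟫) • X₀)
    (hA'V : ∀ v ∈ V, A' v = bt • v + ((γt₀ - bt) * ⟪v, e⟫) • e) (hY : Y ∈ H) (hv : v ∈ V)
    (hYX₀ : ⟪Y, X₀⟫ = 0) (hve : ⟪v, e⟫ = 0) :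
    A' (Y + v) = bt • v := by
  simp [hA'H Y hY, hA'V v hv, hYX₀, hve]

theorem typeB2_nullity_iff (hX₀e : LinearIndependent ℝ ![X₀, e])
    (hdet : β * γ - lam ^ 2 ≠ 0)
    (hAH : ∀ Y ∈ H, A Y = ⟪Y, X₀⟫ • (β • X₀ + lam • e))
    (hAV : ∀ v ∈ V, A v = ⟪v, e⟫ • (lam • X₀ + γ • e))
    (hA'H : ∀ Y ∈ H, A' Y = (βt₀ * ⟪Y, X₀⟫) • X₀)
    (hA'V : ∀ v ∈ V, A' v = bt • v + ((γt₀ - bt) * ⟪v, e⟫) • e) (hY : Y ∈ H) (hv : v ∈ V) :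
    A (Y + v) = 0 ∧ A' (Y + v) = 0 ↔ ⟪Y, X₀⟫ = 0 ∧ ⟪v, e⟫ = 0 ∧ bt • v = 0 := by
  rw [typeB2_map_add_eq_zero_iff hX₀e hdet hAH hAV hY hv, and_assoc]
  refine and_congr_right fun hYX₀ ↦ and_congr_right fun hve ↦ ?_
  rw [typeB2_map_add_of_inner_eq_zero hA'H hA'V hY hv hYX₀ hve]

end TypeB2

theorem stmt_14_general {E W : Type*}
    [NormedAddCommGroup E] [InnerProductSpace ℝ E]
    [NormedAddCommGroup W] [InnerProductSpace ℝ W]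
    (H V : Submodule ℝ E)
    (horth : ∀ x ∈ H, ∀ v ∈ V, ⟪x, v⟫ = 0)
    (hsup : H ⊔ V = ⊤)
    (X₀ : E) (hX₀ : X₀ ∈ H) (hX₀n : ‖X₀‖ = 1)
    (e : E) (he : e ∈ V) (hen : ‖e‖ = 1)
    (ξ ξ' : W) (hξ : ‖ξ‖ = 1) (hξ' : ‖ξ'‖ = 1) (hξξ' : ⟪ξ, ξ'⟫ = 0)
    (β lam γ βt₀ γt₀ bt δt₀ : ℝ)
    (hB2 : β * γ - lam ^ 2 ≠ 0) (hβt₀ : βt₀ ≠ 0)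
    (hbt : bt = βt₀⁻¹ * δt₀)
    (A A' : E →ₗ[ℝ] E)
    (hAH : ∀ Y ∈ H, A Y = ⟪Y, X₀⟫ • (β • X₀ + lam • e))
    (hAV : ∀ v ∈ V, A v = ⟪v, e⟫ • (lam • X₀ + γ • e))
    (hA'H : ∀ Y ∈ H, A' Y = (βt₀ * ⟪Y, X₀⟫) • X₀)
    (hA'V : ∀ v ∈ V, A' v = bt • v + ((γt₀ - bt) * ⟪v, e⟫) • e) :
    (δt₀ ≠ 0 → ∀ T : E,
      (∀ u : E, ⟪A T, u⟫ • ξ + ⟪A' T, u⟫ • ξ' = (0 : W)) ↔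
      (T ∈ H ∧ ⟪T, X₀⟫ = 0)) ∧
    (δt₀ = 0 → ∀ T : E,
      (∀ u : E, ⟪A T, u⟫ • ξ + ⟪A' T, u⟫ • ξ' = (0 : W)) ↔
      (∃ Y ∈ H, ∃ v ∈ V, ⟪Y, X₀⟫ = 0 ∧ ⟪v, e⟫ = 0 ∧ T = Y + v)) := by
  have hα : ∀ T : E, (∀ u : E, ⟪A T, u⟫ • ξ + ⟪A' T, u⟫ • ξ' = (0 : W)) ↔ A T = 0 ∧ A' T = 0 :=
    fun T ↦ forall_inner_smul_add_inner_smul_eq_zero_iff (linearIndependent_pair_of_inner_eq_zero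
      (norm_ne_zero_iff.mp (by simp [hξ])) (norm_ne_zero_iff.mp (by simp [hξ'])) hξξ') _ _
  have hX₀e : LinearIndependent ℝ ![X₀, e] := linearIndependent_pair_of_inner_eq_zero
    (norm_ne_zero_iff.mp (by simp [hX₀n])) (norm_ne_zero_iff.mp (by simp [hen]))
    (horth X₀ hX₀ e he)
  have hnull : ∀ Y ∈ H, ∀ v ∈ V,
      A (Y + v) = 0 ∧ A' (Y + v) = 0 ↔ ⟪Y, X₀⟫ = 0 ∧ ⟪v, e⟫ = 0 ∧ bt • v = 0 :=
    fun Y hY v hv ↦ typeB2_nullity_iff hX₀e hB2 hAH hAV hA'H hA'V hY hv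
  have hdecomp (T : E) : ∃ Y ∈ H, ∃ v ∈ V, Y + v = T :=
    Submodule.mem_sup.mp (hsup ▸ Submodule.mem_top)
  refine ⟨fun hδ T ↦ ?_, fun hδ T ↦ ?_⟩ <;> rw [hα]
  · have hbt₀ : bt ≠ 0 := hbt ▸ mul_ne_zero (inv_ne_zero hβt₀) hδ
    refine ⟨fun hT ↦ ?_, fun ⟨hT, hTX₀⟩ ↦ ?_⟩
    · obtain ⟨Y, hY, v, hv, rfl⟩ := hdecomp T
      obtain ⟨hYX₀, -, hbv⟩ := (hnull Y hY v hv).1 hT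
      obtain rfl := (smul_eq_zero.mp hbv).resolve_left hbt₀
      simpa using ⟨hY, hYX₀⟩
    · simpa using (hnull T hT 0 V.zero_mem).2 ⟨hTX₀, by simp, by simp⟩
  · refine ⟨fun hT ↦ ?_, fun ⟨Y, hY, v, hv, hYX₀, hve, hT⟩ ↦ ?_⟩
    · obtain ⟨Y, hY, v, hv, rfl⟩ := hdecomp T
      obtain ⟨hYX₀, hve, -⟩ := (hnull Y hY v hv).1 hT
      exact ⟨Y, hY, v, hv, hYX₀, hve, rfl⟩
    · exact hT ▸ (hnull Y hY v hv).2 ⟨hYX₀, hve, by simp [hbt, hδ]⟩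

/-- Dichotomy for the relative nullity subspace of a type-B₂ immersion
(beginning of the proof of Proposition 3.10): with the second fundamental form
`α(T,u) = ⟨A T,u⟩ξ + ⟨A' T,u⟩ξ̃` in the type-B₂ normal form, the relative
nullity subspace `Δ = {T : α(T,·) = 0}` equals `{X₀}ᗮ ∩ H` when `δ̃₀ ≠ 0`,
and equals `({X₀}ᗮ ∩ H) ⊕ ({e}ᗮ ∩ V)` when `δ̃₀ = 0`. -/
theorem stmt_14 {E W : Type*}
    [NormedAddCommGroup E] [InnerProductSpace ℝ E]
    [NormedAddCommGroup W] [InnerProductSpace ℝ W]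
    (H V : Submodule ℝ E)
    (horth : ∀ x ∈ H, ∀ v ∈ V, ⟪x, v⟫ = 0)
    (hsup : H ⊔ V = ⊤)
    (X₀ : E) (hX₀ : X₀ ∈ H) (hX₀n : ‖X₀‖ = 1)
    (e : E) (he : e ∈ V) (hen : ‖e‖ = 1)
    (ξ ξ' : W) (hξ : ‖ξ‖ = 1) (hξ' : ‖ξ'‖ = 1) (hξξ' : ⟪ξ, ξ'⟫ = 0)
    (β lam γ βt₀ γt₀ bt δt₀ : ℝ)
    (hlam : lam ≠ 0) (hB2 : β * γ - lam ^ 2 ≠ 0) (hβt₀ : βt₀ ≠ 0)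
    (hδt₀ : δt₀ = βt₀ * γt₀ + β * γ - lam ^ 2)
    (hbt : bt = βt₀⁻¹ * δt₀)
    (A A' : E →ₗ[ℝ] E)
    (hAH : ∀ Y ∈ H, A Y = ⟪Y, X₀⟫ • (β • X₀ + lam • e))
    (hAV : ∀ v ∈ V, A v = ⟪v, e⟫ • (lam • X₀ + γ • e))
    (hA'H : ∀ Y ∈ H, A' Y = (βt₀ * ⟪Y, X₀⟫) • X₀)
    (hA'V : ∀ v ∈ V, A' v = bt • v + ((γt₀ - bt) * ⟪v, e⟫) • e) :
    (δt₀ ≠ 0 → ∀ T : E,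
      (∀ u : E, ⟪A T, u⟫ • ξ + ⟪A' T, u⟫ • ξ' = (0 : W)) ↔
      (T ∈ H ∧ ⟪T, X₀⟫ = 0)) ∧
    (δt₀ = 0 → ∀ T : E,
      (∀ u : E, ⟪A T, u⟫ • ξ + ⟪A' T, u⟫ • ξ' = (0 : W)) ↔
      (∃ Y ∈ H, ∃ v ∈ V, ⟪Y, X₀⟫ = 0 ∧ ⟪v, e⟫ = 0 ∧ T = Y + v)) :=
  stmt_14_general H V horth hsup X₀ hX₀ hX₀n e he hen ξ ξ' hξ hξ' hξξ' β lam γ βt₀ γt₀ bt δt₀ hB2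
    hβt₀ hbt A A' hAH hAV hA'H hA'V
end

section
/- In the type-B₂ normal form above, there is no unit vector ξ̄ = cos θ ξ + sin θ ξ̃ in W such that the restriction of A_ξ̄ to span{X₀, e} ⊕ ({e}^⊥ ∩ V) acts as a multiple of the identity on the subspace span{X₀} ⊕ V; that is, the conditions ⟨A_ξ̄X₀, e⟩ = 0 and ⟨A_ξ̄X₀,X₀⟩ = ⟨A_ξ̄e,e⟩ = ⟨A_ξ̄S,S⟩ for a unit S ∈ {e}^⊥ ∩ V are incompatible with λ ≠ 0 and βγ − λ² ≠ 0. -/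
open scoped RealInnerProductSpace

/-!
The condition `⟨A_ξ̄X₀, e⟩ = λ cos θ = 0` forces `cos θ = 0`, i.e. `ξ̄ = ±ξ̃`. For `ξ̃` the
remaining condition `⟨A_ξ̃e, e⟩ = ⟨A_ξ̃S, S⟩` reads `γ̃₀ = b̃`, whereas the normal form gives
`b̃ − γ̃₀ = β̃₀⁻¹(βγ − λ²) ≠ 0`.
-/

lemma inner_smul_add_smul_right_eq {E : Type*} [NormedAddCommGroup E] [InnerProductSpace ℝ E]
    {x y : E} (hxy : ⟪x, y⟫ = 0) (hy : ‖y‖ = 1) (a b : ℝ) : ⟪a • x + b • y, y⟫ = b := by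
  rw [inner_add_left, real_inner_smul_left, real_inner_smul_left, hxy,
    inner_self_eq_one_of_norm_eq_one hy]
  ring

lemma B2_umbilic_conditions_false {c s lam β γ βt₀ γt₀ : ℝ}
    (hlam : lam ≠ 0) (hB2 : β * γ - lam ^ 2 ≠ 0) (hβt₀ : βt₀ ≠ 0) (hcs : c ^ 2 + s ^ 2 = 1)
    (hoff : c * lam = 0)
    (hdiag : c * γ + s * γt₀ = s * (βt₀⁻¹ * (βt₀ * γt₀ + β * γ - lam ^ 2))) : False := by
  have hc : c = 0 := (mul_eq_zero.1 hoff).resolve_right hlam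
  have hs : s ≠ 0 := by rintro rfl; simp [hc] at hcs
  have hbt : βt₀⁻¹ * (βt₀ * γt₀ + β * γ - lam ^ 2) = γt₀ := by
    rw [hc, zero_mul, zero_add] at hdiag
    exact (mul_left_cancel₀ hs hdiag).symm
  have hδ : βt₀ * γt₀ + β * γ - lam ^ 2 = βt₀ * γt₀ := by
    rw [← mul_inv_cancel_left₀ hβt₀ (βt₀ * γt₀ + β * γ - lam ^ 2), hbt]
  exact hB2 (by linarith)

/-- In the type-B₂ normal form there is no unit normal direction
`ξ̄ = cos θ ξ + sin θ ξ̃` whose shape operator restricts as a multiple of the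
identity on `span{X₀} ⊕ V`: the conditions `⟨A_ξ̄X₀,e⟩ = 0` and
`⟨A_ξ̄X₀,X₀⟩ = ⟨A_ξ̄e,e⟩ = ⟨A_ξ̄S,S⟩` for a unit `S ∈ {e}ᗮ ∩ V` are
incompatible with `λ ≠ 0` and `βγ − λ² ≠ 0` (proof of Proposition 3.10). -/
theorem stmt_15 {E : Type*} [NormedAddCommGroup E] [InnerProductSpace ℝ E]
    (H V : Submodule ℝ E)
    (horth : ∀ x ∈ H, ∀ v ∈ V, ⟪x, v⟫ = 0)
    (X₀ : E) (hX₀ : X₀ ∈ H) (hX₀n : ‖X₀‖ = 1)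
    (e : E) (he : e ∈ V) (hen : ‖e‖ = 1)
    (β lam γ βt₀ γt₀ bt δt₀ : ℝ)
    (hlam : lam ≠ 0) (hB2 : β * γ - lam ^ 2 ≠ 0) (hβt₀ : βt₀ ≠ 0)
    (hδt₀ : δt₀ = βt₀ * γt₀ + β * γ - lam ^ 2)
    (hbt : bt = βt₀⁻¹ * δt₀)
    (A A' : E →ₗ[ℝ] E)
    (hAH : ∀ Y ∈ H, A Y = ⟪Y, X₀⟫ • (β • X₀ + lam • e))
    (hAV : ∀ v ∈ V, A v = ⟪v, e⟫ • (lam • X₀ + γ • e))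
    (hA'H : ∀ Y ∈ H, A' Y = (βt₀ * ⟪Y, X₀⟫) • X₀)
    (hA'V : ∀ v ∈ V, A' v = bt • v + ((γt₀ - bt) * ⟪v, e⟫) • e) :
    ∀ cθ sθ : ℝ, cθ ^ 2 + sθ ^ 2 = 1 →
      ∀ S ∈ V, ‖S‖ = 1 → ⟪S, e⟫ = 0 →
        ¬(cθ * ⟪A X₀, e⟫ + sθ * ⟪A' X₀, e⟫ = 0 ∧
          cθ * ⟪A X₀, X₀⟫ + sθ * ⟪A' X₀, X₀⟫ =
            cθ * ⟪A e, e⟫ + sθ * ⟪A' e, e⟫ ∧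
          cθ * ⟪A e, e⟫ + sθ * ⟪A' e, e⟫ =
            cθ * ⟪A S, S⟫ + sθ * ⟪A' S, S⟫) := by
  rintro cθ sθ hcs S hS hSn hSe ⟨hoff, -, hdiag⟩
  have hXe : ⟪X₀, e⟫ = 0 := horth X₀ hX₀ e he
  have hXX := inner_self_eq_one_of_norm_eq_one (𝕜 := ℝ) hX₀n
  have hee := inner_self_eq_one_of_norm_eq_one (𝕜 := ℝ) hen
  have hSS := inner_self_eq_one_of_norm_eq_one (𝕜 := ℝ) hSn
  have hAXe : ⟪A X₀, e⟫ = lam := by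
    rw [hAH X₀ hX₀, hXX, one_smul, inner_smul_add_smul_right_eq hXe hen]
  have hA'Xe : ⟪A' X₀, e⟫ = 0 := by
    rw [hA'H X₀ hX₀, real_inner_smul_left, hXe, mul_zero]
  have hAee : ⟪A e, e⟫ = γ := by
    rw [hAV e he, hee, one_smul, inner_smul_add_smul_right_eq hXe hen]
  have hA'ee : ⟪A' e, e⟫ = γt₀ := by
    rw [hA'V e he, hee, mul_one, ← add_smul, real_inner_smul_left, hee]
    ring
  have hASS : ⟪A S, S⟫ = 0 := by
    rw [hAV S hS, hSe, zero_smul, inner_zero_left]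
  have hA'SS : ⟪A' S, S⟫ = bt := by
    rw [hA'V S hS, hSe, mul_zero, zero_smul, add_zero, real_inner_smul_left, hSS, mul_one]
  rw [hAXe, hA'Xe, mul_zero, add_zero] at hoff
  rw [hAee, hA'ee, hASS, hA'SS, mul_zero, zero_add, hbt, hδt₀] at hdiag
  exact B2_umbilic_conditions_false hlam hB2 hβt₀ hcs hoff hdiag
end

section
/- Let f = F × G : L ×_ρ M → L̄ ×_ρ̄ M̄ be a product of isometric immersions F : L → L̄ and G : M → M̄ between warped products with ρ = ρ̄ ∘ F. Then the vertical subspace V_z at z = (y,x) is contained in the relative nullity subspace Δ(z) of f if and only if G is totally geodesic at x and the component of grad ρ̄ at F(y) normal to F is zero, i.e. (grad ρ̄(F(y)))_{T_y^⊥L} = 0. -/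
open scoped RealInnerProductSpace

/-- Last assertion of Corollary 2.4(i): for a product `f = F × G` of isometric
immersions between warped products (with the second fundamental form given
componentwise by Proposition 2.3(iii)), the vertical subspace at `z = (y,x)`
is contained in the relative nullity subspace `Δ(z)` of `f` if and only if `G`
is totally geodesic at `x` and the normal component of `grad ρ̄` at `F(y)`
vanishes. -/
theorem stmt_16 {TL TM NL NM : Type*}
    [NormedAddCommGroup TL] [InnerProductSpace ℝ TL]
    [NormedAddCommGroup TM] [InnerProductSpace ℝ TM] [Nontrivial TM]
    [NormedAddCommGroup NL] [InnerProductSpace ℝ NL]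
    [NormedAddCommGroup NM] [InnerProductSpace ℝ NM]
    (αF : TL →ₗ[ℝ] TL →ₗ[ℝ] NL) (αG : TM →ₗ[ℝ] TM →ₗ[ℝ] NM)
    (ρy : ℝ) (hρy : 0 < ρy) (gperp : NL)
    (αf : (TL × TM) →ₗ[ℝ] (TL × TM) →ₗ[ℝ] NL × NM)
    (hfM : ∀ u u' : TL × TM, (αf u u').2 = αG u.2 u'.2)
    (hfL : ∀ u u' : TL × TM,
      (αf u u').1 = αF u.1 u'.1 - (ρy * ⟪u.2, u'.2⟫) • gperp) :
    (∀ v : TM, ∀ u : TL × TM, αf (0, v) u = 0) ↔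
      ((∀ v w : TM, αG v w = 0) ∧ gperp = 0) := by
  constructor
  · intro h
    constructor
    · intro v w
      have := congrArg Prod.snd (h v (0, w))
      simpa [hfM] using this
    · obtain ⟨v, hv⟩ := exists_ne (0 : TM)
      have := congrArg Prod.fst (h v (0, v))
      rw [hfL] at this
      simp only [map_zero, LinearMap.zero_apply, zero_sub, Prod.fst_zero,
        neg_eq_zero, smul_eq_zero] at this
      rcases this with h1 | h1
      · exfalso
        rcases mul_eq_zero.1 h1 with h2 | h2
        · exact hρy.ne' h2
        · exact hv (inner_self_eq_zero.mp h2)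
      · exact h1
  · rintro ⟨hG, hg⟩ v u
    ext
    · rw [hfL]; simp [hg]
    · rw [hfM]; simp [hG]
end
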